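/- arXiv:1005.4254 — 6 statements merged into one kernel-verified Lean document; each statement's English description precedes it below -/
import Mathlib

section
/- An ideal I of the localized polynomial ring S_f is a monomial ideal if and only if there exists a monomial ideal I' of S such that I = I'·S_f. Moreover, I' can be chosen so that every minimal monomial generator u of I' satisfies supp(u) ⊆ {1,…,n}∖A, and the monomial ideal I' with this extra property is uniquely determined, namely I' = I ∩ S. -/
/-!
In `S_f` every `x_j` with `j ∈ A` is a unit, so every monomial of `S_f` is associated to the
image of a monomial of `S` supported off `A`; hence a monomial ideal `I` of `S_f` is extended
from the ideal of `S` generated by those monomials. Conversely, an ideal `I'` generated by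
monomials supported off `A` is saturated with respect to `f`: multiplication by `f^k` only
raises exponents in the coordinates of `A`, which no generator involves, so `f^k p ∈ I'`
forces `p ∈ I'`. Thus `I' = I'S_f ∩ S`, which is the uniqueness.
-/

open MvPolynomial

noncomputable section

variable {K : Type} [Field K] {n : ℕ}

/-- `y` is a monomial of the localization `S_f`, i.e. `y = x^a / f^k`
for some `a : ℕⁿ` and `k : ℕ`. -/
def IsMonomialLoc (f : MvPolynomial (Fin n) K) (y : Localization.Away f) : Prop :=
  ∃ (a : Fin n →₀ ℕ) (k : ℕ),
    y * algebraMap (MvPolynomial (Fin n) K) (Localization.Away f) (f ^ k) =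
      algebraMap (MvPolynomial (Fin n) K) (Localization.Away f) (monomial a 1)

/-- `I` is a monomial ideal of `S_f`: it is generated by monomials. -/
def IsMonomialIdealLoc (f : MvPolynomial (Fin n) K)
    (I : Ideal (Localization.Away f)) : Prop :=
  ∃ G : Set (Localization.Away f), (∀ y ∈ G, IsMonomialLoc f y) ∧ I = Ideal.span G

/-- `I'` is a monomial ideal of `S = K[x_1, …, x_n]`. -/
def IsMonomialIdealPoly (I' : Ideal (MvPolynomial (Fin n) K)) : Prop :=
  ∃ G : Set (MvPolynomial (Fin n) K),
    (∀ g ∈ G, ∃ a : Fin n →₀ ℕ, g = monomial a 1) ∧ I' = Ideal.span G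

/-- `I'` is a monomial ideal of `S` generated by monomials `u` with `supp u ⊆ [n] ∖ A`;
equivalently (by minimality of `G(I')` inside any monomial generating set), every
minimal monomial generator `u` of `I'` satisfies `supp u ⊆ [n] ∖ A`. -/
def IsMonomialIdealOff (A : Finset (Fin n)) (I' : Ideal (MvPolynomial (Fin n) K)) : Prop :=
  ∃ G : Set (MvPolynomial (Fin n) K),
    (∀ g ∈ G, ∃ a : Fin n →₀ ℕ, (∀ j ∈ A, a j = 0) ∧ g = monomial a 1) ∧ I' = Ideal.span G

namespace MvPolynomial

theorem mem_span_monomial_of_mul_monomial_mem {σ R : Type*} [CommSemiring R]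
    {T : Set (σ →₀ ℕ)} {p : MvPolynomial σ R} {b : σ →₀ ℕ}
    (hT : ∀ a ∈ T, ∀ j, b j ≠ 0 → a j = 0)
    (h : p * monomial b 1 ∈ Ideal.span ((fun a => monomial a (1 : R)) '' T)) :
    p ∈ Ideal.span ((fun a => monomial a (1 : R)) '' T) := by
  rw [mem_ideal_span_monomial_image] at h ⊢
  intro xi hxi
  have hxib : xi + b ∈ (p * monomial b 1).support := by
    rw [mem_support_iff, coeff_mul_monomial, mul_one]
    exact mem_support_iff.mp hxi
  obtain ⟨a, ha, hle⟩ := h _ hxib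
  refine ⟨a, ha, fun j => ?_⟩
  by_cases hb : b j = 0
  · simpa [hb] using hle j
  · simp [hT a ha j hb]

theorem prod_X_pow_eq_monomial_sum_single {σ R : Type*} [CommSemiring R] (A : Finset σ) (k : ℕ) :
    (∏ j ∈ A, X j) ^ k = (monomial (∑ j ∈ A, Finsupp.single j k) 1 : MvPolynomial σ R) := by
  rw [monomial_sum_one, ← Finset.prod_pow]
  simp only [X_pow_eq_monomial]

end MvPolynomial

section Localization

variable {A : Finset (Fin n)} {f : MvPolynomial (Fin n) K}

theorem IsMonomialIdealOff.isMonomialIdealPoly {I' : Ideal (MvPolynomial (Fin n) K)}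
    (h : IsMonomialIdealOff A I') : IsMonomialIdealPoly I' := by
  obtain ⟨G, hG, rfl⟩ := h
  exact ⟨G, fun g hg => (hG g hg).imp fun _ => And.right, rfl⟩

theorem IsMonomialIdealOff.exists_eq_span_image {I' : Ideal (MvPolynomial (Fin n) K)}
    (h : IsMonomialIdealOff A I') :
    ∃ T : Set (Fin n →₀ ℕ), (∀ a ∈ T, ∀ j ∈ A, a j = 0) ∧
      I' = Ideal.span ((fun a => monomial a (1 : K)) '' T) := by
  obtain ⟨G, hG, rfl⟩ := h
  refine ⟨{a | (∀ j ∈ A, a j = 0) ∧ monomial a 1 ∈ G}, fun a ha => ha.1, congrArg _ ?_⟩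
  refine Set.Subset.antisymm (fun g hg => ?_) (Set.image_subset_iff.2 fun a ha => ha.2)
  obtain ⟨a, ha, rfl⟩ := hG g hg
  exact ⟨a, ⟨ha, hg⟩, rfl⟩

theorem isMonomialIdealLoc_map {I' : Ideal (MvPolynomial (Fin n) K)}
    (h : IsMonomialIdealPoly I') :
    IsMonomialIdealLoc f
      (Ideal.map (algebraMap (MvPolynomial (Fin n) K) (Localization.Away f)) I') := by
  obtain ⟨G, hG, rfl⟩ := h
  refine ⟨algebraMap _ _ '' G, ?_, Ideal.map_span _ _⟩
  rintro _ ⟨g, hg, rfl⟩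
  obtain ⟨a, rfl⟩ := hG g hg
  exact ⟨a, 0, by simp⟩

theorem IsMonomialLoc.exists_associated {y : Localization.Away f} (hy : IsMonomialLoc f y) :
    ∃ a : Fin n →₀ ℕ,
      Associated y (algebraMap (MvPolynomial (Fin n) K) (Localization.Away f) (monomial a 1)) := by
  obtain ⟨a, k, h⟩ := hy
  refine ⟨a, h ▸ associated_mul_unit_right _ _ ?_⟩
  rw [map_pow]
  exact (IsLocalization.Away.algebraMap_isUnit f).pow k

theorem isUnit_algebraMap_X (hf : f = ∏ j ∈ A, X j) {j : Fin n} (hj : j ∈ A) :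
    IsUnit (algebraMap (MvPolynomial (Fin n) K) (Localization.Away f) (X j)) :=
  isUnit_of_dvd_unit (map_dvd _ (hf ▸ Finset.dvd_prod_of_mem X hj))
    (IsLocalization.Away.algebraMap_isUnit f)

theorem isUnit_algebraMap_monomial (hf : f = ∏ j ∈ A, X j) {a : Fin n →₀ ℕ}
    (ha : ∀ j ∉ A, a j = 0) :
    IsUnit (algebraMap (MvPolynomial (Fin n) K) (Localization.Away f) (monomial a 1)) := by
  rw [← prod_X_pow_eq_monomial, map_prod, IsUnit.prod_iff]
  intro j hj
  rw [map_pow]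
  refine (isUnit_algebraMap_X hf ?_).pow _
  by_contra hjA
  exact Finsupp.mem_support_iff.1 hj (ha j hjA)

theorem associated_algebraMap_monomial_filter_notMem (hf : f = ∏ j ∈ A, X j)
    (a : Fin n →₀ ℕ) :
    Associated (algebraMap (MvPolynomial (Fin n) K) (Localization.Away f) (monomial a 1))
      (algebraMap (MvPolynomial (Fin n) K) (Localization.Away f)
        (monomial (a.filter (· ∉ A)) 1)) := by
  have hunit := isUnit_algebraMap_monomial hf (a := a.filter (· ∈ A))
    fun j hj => Finsupp.filter_apply_neg _ _ hj
  conv_lhs => rw [← Finsupp.filter_add_filter_not a (· ∈ A), ← mul_one 1,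
    ← monomial_mul, map_mul]
  exact associated_unit_mul_left _ _ hunit

theorem IsMonomialLoc.exists_associated_off (hf : f = ∏ j ∈ A, X j) {y : Localization.Away f}
    (hy : IsMonomialLoc f y) :
    ∃ b : Fin n →₀ ℕ, (∀ j ∈ A, b j = 0) ∧
      Associated y (algebraMap (MvPolynomial (Fin n) K) (Localization.Away f) (monomial b 1)) := by
  obtain ⟨a, ha⟩ := hy.exists_associated
  exact ⟨a.filter (· ∉ A), fun j hj => Finsupp.filter_apply_neg _ _ (not_not.2 hj),
    ha.trans (associated_algebraMap_monomial_filter_notMem hf a)⟩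

/-- This is `I ∩ S` (`eq_comap_of_isMonomialIdealOff`), given through generators so that it is
visibly monomial. -/
def monomialContractionOff (A : Finset (Fin n)) (I : Ideal (Localization.Away f)) :
    Ideal (MvPolynomial (Fin n) K) :=
  Ideal.span ((fun a => monomial a (1 : K)) ''
    {a | (∀ j ∈ A, a j = 0) ∧
      algebraMap (MvPolynomial (Fin n) K) (Localization.Away f) (monomial a 1) ∈ I})

theorem isMonomialIdealOff_monomialContractionOff (I : Ideal (Localization.Away f)) :
    IsMonomialIdealOff A (monomialContractionOff A I) := by
  refine ⟨_, ?_, rfl⟩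
  rintro _ ⟨a, ha, rfl⟩
  exact ⟨a, ha.1, rfl⟩

theorem map_monomialContractionOff (hf : f = ∏ j ∈ A, X j) {I : Ideal (Localization.Away f)}
    (hI : IsMonomialIdealLoc f I) :
    Ideal.map (algebraMap (MvPolynomial (Fin n) K) (Localization.Away f))
      (monomialContractionOff A I) = I := by
  refine le_antisymm ?_ ?_
  · rw [Ideal.map_le_iff_le_comap, monomialContractionOff, Ideal.span_le]
    rintro _ ⟨a, ⟨-, ha⟩, rfl⟩
    exact ha
  · obtain ⟨G, hG, rfl⟩ := hI
    rw [Ideal.span_le]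
    intro y hy
    obtain ⟨b, hbA, hyb⟩ := (hG y hy).exists_associated_off hf
    have hb := (Ideal.mem_iff_of_associated hyb).1 (Ideal.subset_span hy)
    exact (Ideal.mem_iff_of_associated hyb).2
      (Ideal.mem_map_of_mem _ (Ideal.subset_span ⟨b, ⟨hbA, hb⟩, rfl⟩))

theorem comap_map_of_isMonomialIdealOff (hf : f = ∏ j ∈ A, X j)
    {I' : Ideal (MvPolynomial (Fin n) K)} (h : IsMonomialIdealOff A I') :
    Ideal.comap (algebraMap (MvPolynomial (Fin n) K) (Localization.Away f))
      (Ideal.map (algebraMap (MvPolynomial (Fin n) K) (Localization.Away f)) I') = I' := by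
  refine le_antisymm (fun p hp => ?_) Ideal.le_comap_map
  obtain ⟨T, hTA, rfl⟩ := h.exists_eq_span_image
  rw [Ideal.mem_comap, IsLocalization.algebraMap_mem_map_algebraMap_iff (Submonoid.powers f)]
    at hp
  obtain ⟨_, ⟨k, rfl⟩, hp⟩ := hp
  dsimp only at hp
  rw [hf, mul_comm, prod_X_pow_eq_monomial_sum_single] at hp
  refine mem_span_monomial_of_mul_monomial_mem (fun a ha j hj => hTA a ha j ?_) hp
  by_contra hjA
  rw [Finsupp.finsetSum_apply] at hj
  exact hj (Finset.sum_eq_zero fun i hi =>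
    Finsupp.single_eq_of_ne (ne_of_mem_of_not_mem hi hjA).symm)

theorem eq_comap_of_isMonomialIdealOff (hf : f = ∏ j ∈ A, X j)
    {I : Ideal (Localization.Away f)} {I' : Ideal (MvPolynomial (Fin n) K)}
    (h : IsMonomialIdealOff A I')
    (hI : I = Ideal.map (algebraMap (MvPolynomial (Fin n) K) (Localization.Away f)) I') :
    I' = Ideal.comap (algebraMap (MvPolynomial (Fin n) K) (Localization.Away f)) I := by
  rw [hI, comap_map_of_isMonomialIdealOff hf h]

end Localization

/-- An ideal `I ⊆ S_f` is a monomial ideal iff `I = I'·S_f` for some monomial ideal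
`I' ⊆ S`; moreover `I'` can be chosen with all (minimal) monomial generators supported
off `A`, and the monomial ideal `I'` with this extra property is uniquely determined,
namely `I' = I ∩ S`. -/
theorem monomial_ideal_localization_characterization
    (A : Finset (Fin n)) (f : MvPolynomial (Fin n) K) (hf : f = ∏ j ∈ A, X j)
    (I : Ideal (Localization.Away f)) :
    (IsMonomialIdealLoc f I ↔
      ∃ I' : Ideal (MvPolynomial (Fin n) K), IsMonomialIdealPoly I' ∧
        I = Ideal.map (algebraMap (MvPolynomial (Fin n) K) (Localization.Away f)) I') ∧
    (IsMonomialIdealLoc f I →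
      ∃! I' : Ideal (MvPolynomial (Fin n) K), IsMonomialIdealOff A I' ∧
        I = Ideal.map (algebraMap (MvPolynomial (Fin n) K) (Localization.Away f)) I') ∧
    (IsMonomialIdealLoc f I →
      ∀ I' : Ideal (MvPolynomial (Fin n) K), IsMonomialIdealOff A I' →
        I = Ideal.map (algebraMap (MvPolynomial (Fin n) K) (Localization.Away f)) I' →
        I' = Ideal.comap (algebraMap (MvPolynomial (Fin n) K) (Localization.Away f)) I) := by
  have hoff := isMonomialIdealOff_monomialContractionOff (A := A) I
  refine ⟨⟨fun hI => ⟨_, hoff.isMonomialIdealPoly, (map_monomialContractionOff hf hI).symm⟩,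
      ?_⟩, fun hI => ⟨_, ⟨hoff, (map_monomialContractionOff hf hI).symm⟩, ?_⟩,
    fun _ _ => eq_comap_of_isMonomialIdealOff hf⟩
  · rintro ⟨I', hI', rfl⟩
    exact isMonomialIdealLoc_map hI'
  · rintro J ⟨hJ, hJI⟩
    rw [eq_comap_of_isMonomialIdealOff hf hJ hJI,
      eq_comap_of_isMonomialIdealOff hf hoff (map_monomialContractionOff hf hI).symm]

end
end

section
/- The Stanley depth of S_f equals n: sdepth(S_f) = n. -/
/-!
Combinatorial model of the localized polynomial ring `S_f`, where
`S = K[x_1, …, x_n]`, `A ⊆ {1, …, n}` and `f = ∏_{j ∈ A} x_j`.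

Since all the `ℤⁿ`-graded components of `S_f` are at most one-dimensional over `K`,
monomial `K`-subspaces of `S_f` (in particular monomial ideals, Stanley spaces and
modules `I/J`) are faithfully encoded by their sets of exponent vectors `a : Fin n → ℤ`,
direct sum decompositions into monomial subspaces correspond exactly to partitions of
the exponent sets, and (for those sets `Z` considered here) `u·K[Z]` is automatically a
free `K[Z]`-module.
-/

/-- Exponent vectors of the monomials of `S_f`: all `a : ℤⁿ` with `a j ≥ 0` for `j ∉ A`. -/
def SfMon {n : ℕ} (A : Finset (Fin n)) : Set (Fin n → ℤ) :=
  {a | ∀ j, j ∉ A → 0 ≤ a j}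

/-- `M` is the set of exponent vectors of the monomials of a monomial ideal of `S_f`
(for `A = ∅` this is a monomial ideal of the polynomial ring `S` itself). -/
def IsMonomialIdeal {n : ℕ} (A : Finset (Fin n)) (M : Set (Fin n → ℤ)) : Prop :=
  M ⊆ SfMon A ∧ ∀ a ∈ M, ∀ c ∈ SfMon A, a + c ∈ M

/-- Admissible sets of "variables" for Stanley spaces in `S_f`: `(i, true)` stands for
`x i` and `(i, false)` for `x i⁻¹`; inverse variables exist only for `i ∈ A`, and
`{x i, x i⁻¹} ⊄ Z`. -/
def ZOk {n : ℕ} (A : Finset (Fin n)) (Z : Finset (Fin n × Bool)) : Prop :=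
  (∀ i : Fin n, (i, false) ∈ Z → i ∈ A) ∧
  ∀ i : Fin n, ¬((i, true) ∈ Z ∧ (i, false) ∈ Z)

/-- Exponent vectors of the monomials of the Stanley space `u·K[Z]`. -/
def stanleySet {n : ℕ} (u : Fin n → ℤ) (Z : Finset (Fin n × Bool)) : Set (Fin n → ℤ) :=
  {a | ∀ i : Fin n, ((i, true) ∈ Z → u i ≤ a i) ∧ ((i, false) ∈ Z → a i ≤ u i) ∧
      ((i, true) ∉ Z → (i, false) ∉ Z → a i = u i)}

/-- The family of Stanley spaces `u i · K[Z i]` is a Stanley decomposition of the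
monomial `K`-vector space whose monomials have exponent vectors in `M`. -/
def IsStanleyDecompOn {n : ℕ} (A : Finset (Fin n)) (M : Set (Fin n → ℤ)) {ι : Type}
    (u : ι → Fin n → ℤ) (Z : ι → Finset (Fin n × Bool)) : Prop :=
  Finite ι ∧ (∀ i, ZOk A (Z i)) ∧
  Pairwise (fun i j : ι => Disjoint (stanleySet (u i) (Z i)) (stanleySet (u j) (Z j))) ∧
  (⋃ i, stanleySet (u i) (Z i)) = M

/-- Stanley depth of the monomial `K`-space with exponent set `M` (value `⊤` for `M = ∅`). -/
noncomputable def sdepth {n : ℕ} (A : Finset (Fin n)) (M : Set (Fin n → ℤ)) : ℕ∞ :=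
  sSup {k : ℕ∞ | ∃ (r : ℕ) (u : Fin r → Fin n → ℤ) (Z : Fin r → Finset (Fin n × Bool)),
    IsStanleyDecompOn A M u Z ∧ ∀ i, k ≤ ((Z i).card : ℕ∞)}

/-- The exponent vector of `f = ∏_{j ∈ A} x_j`. -/
def fVec {n : ℕ} (A : Finset (Fin n)) : Fin n → ℤ := fun i => if i ∈ A then 1 else 0

/-- Localization at `f` of a monomial ideal (given by its set of exponent vectors). -/
def locSet {n : ℕ} (A : Finset (Fin n)) (M : Set (Fin n → ℤ)) : Set (Fin n → ℤ) :=
  {b ∈ SfMon A | ∃ k : ℕ, b + (k : ℤ) • fVec A ∈ M}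

/-- `|a| = Σ_i |a_i|`, the degree used for the Hilbert series. -/
def degAbs {n : ℕ} (a : Fin n → ℤ) : ℕ := ∑ i, (a i).natAbs

/-- The Hilbert series `H_M(t) = Σ_d H(M,d) t^d`, `H(M,d) = #{a ∈ M : |a| = d}`, of the
`ℤⁿ`-graded `K`-vector space with monomial exponent set `M`. -/
noncomputable def hilbSeries {n : ℕ} (M : Set (Fin n → ℤ)) : PowerSeries ℚ :=
  PowerSeries.mk fun d => (({a ∈ M | degAbs a = d}).ncard : ℚ)

/-- A prime filtration `J = N 0 ⊂ N 1 ⊂ … ⊂ N r = I` of `I/J` by monomial ideals of `S_f`,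
with `i`-th factor isomorphic, as a `ℤⁿ`-graded module, to `(S_f/P_{B i})(-a i)`, where
`P_B` is the monomial prime ideal generated by the variables `x j`, `j ∈ B`. -/
def IsPrimeFiltration {n : ℕ} (A : Finset (Fin n)) (J I : Set (Fin n → ℤ)) (r : ℕ)
    (N : Fin (r + 1) → Set (Fin n → ℤ)) (B : Fin r → Finset (Fin n))
    (a : Fin r → Fin n → ℤ) : Prop :=
  N 0 = J ∧ N (Fin.last r) = I ∧
  (∀ i : Fin (r + 1), IsMonomialIdeal A (N i)) ∧
  (∀ i : Fin r, N i.castSucc ⊂ N i.succ) ∧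
  (∀ i : Fin r, ∀ j ∈ A, j ∉ B i) ∧
  (∀ i : Fin r, ∀ j, 0 ≤ a i j) ∧
  (∀ i : Fin r, ∀ j ∈ A, a i j = 0) ∧
  (∀ i : Fin r, N i.succ \ N i.castSucc =
    {b | ∃ c ∈ SfMon A, (∀ j ∈ B i, c j = 0) ∧ b = a i + c})

/-- `fdepth` of `I/J` (value `⊤` for `I = J`); `dim S_f/P_B = n - |B|`. -/
noncomputable def fdepth {n : ℕ} (A : Finset (Fin n)) (J I : Set (Fin n → ℤ)) : ℕ∞ :=
  sSup {k : ℕ∞ | ∃ (r : ℕ) (N : Fin (r + 1) → Set (Fin n → ℤ)) (B : Fin r → Finset (Fin n))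
      (a : Fin r → Fin n → ℤ), IsPrimeFiltration A J I r N B a ∧
      ∀ i, k ≤ ((n - (B i).card : ℕ) : ℕ∞)}

/-- The set of exponent vectors of the monomials of the colon ideal `(J :_{S_f} I)`,
which is the annihilator of `I/J`. -/
def colonSet {n : ℕ} (A : Finset (Fin n)) (I J : Set (Fin n → ℤ)) : Set (Fin n → ℤ) :=
  {c ∈ SfMon A | ∀ a ∈ I, a + c ∈ J}

/-- The monomial prime `P_B·S_f` contains the monomial ideal with exponent set `Q`. -/
def primeContainsIdeal {n : ℕ} (B : Finset (Fin n)) (Q : Set (Fin n → ℤ)) : Prop :=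
  ∀ c ∈ Q, ∃ j ∈ B, 1 ≤ c j

/-- `P_B·S_f` is a minimal prime ideal of the module `I/J`, i.e. a prime of `S_f`
(so `B ∩ A = ∅`) minimal among those containing `ann(I/J) = (J : I)`. -/
def IsMinimalPrimeOf {n : ℕ} (A B : Finset (Fin n)) (I J : Set (Fin n → ℤ)) : Prop :=
  (∀ j ∈ A, j ∉ B) ∧ primeContainsIdeal B (colonSet A I J) ∧
  ∀ B' ⊆ B, primeContainsIdeal B' (colonSet A I J) → B' = B

/-- `sdepth S_f = n`. -/
theorem sdepth_Sf {n : ℕ} (A : Finset (Fin n)) : sdepth A (SfMon A) = (n : ℕ∞) := by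
  classical
  apply le_antisymm
  · -- upper bound: every Stanley decomposition has some |Z i| ≤ n
    apply sSup_le
    rintro k ⟨r, u, Z, ⟨_, hZok, _, hunion⟩, hk⟩
    have h0 : (0 : Fin n → ℤ) ∈ SfMon A := fun j _ => le_refl 0
    rw [← hunion] at h0
    obtain ⟨_, ⟨i, rfl⟩, _⟩ := h0
    refine le_trans (hk i) ?_
    have hcard : (Z i).card ≤ n := by
      have h2 : (Z i).card ≤ (Finset.univ : Finset (Fin n)).card := by
        apply Finset.card_le_card_of_injOn Prod.fst (fun _ _ => Finset.mem_univ _)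
        rintro ⟨a, b⟩ ha ⟨a', b'⟩ hb (h : a = a')
        subst h
        cases b <;> cases b'
        · rfl
        · exact absurd ⟨hb, ha⟩ ((hZok i).2 a)
        · exact absurd ⟨ha, hb⟩ ((hZok i).2 a)
        · rfl
      simpa using h2
    exact_mod_cast hcard
  · -- lower bound: explicit decomposition indexed by subsets of A
    apply le_sSup
    set r := A.powerset.card with hr
    set e : A.powerset ≃ Fin r := A.powerset.equivFin with he
    set T : Fin r → Finset (Fin n) := fun k => (e.symm k : A.powerset) with hT
    set u : Fin r → Fin n → ℤ := fun k i => if i ∈ T k then -1 else 0 with hu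
    set Z : Fin r → Finset (Fin n × Bool) := fun k =>
      Finset.univ.image (fun i : Fin n => (i, decide (i ∉ T k))) with hZ
    have hmemZ : ∀ k (i : Fin n) (b : Bool), (i, b) ∈ Z k ↔ b = decide (i ∉ T k) := by
      intro k i b
      simp only [hZ, Finset.mem_image, Finset.mem_univ, true_and, Prod.mk.injEq]
      constructor
      · rintro ⟨j, hj, rfl⟩
        subst hj; rfl
      · rintro rfl
        exact ⟨i, rfl, rfl⟩
    have hTA : ∀ k, T k ⊆ A := fun k => Finset.mem_powerset.mp (e.symm k).2
    have hstan : ∀ k (a : Fin n → ℤ), a ∈ stanleySet (u k) (Z k) ↔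
        ∀ i, (i ∈ T k → a i ≤ -1) ∧ (i ∉ T k → 0 ≤ a i) := by
      intro k a
      constructor
      · intro ha i
        obtain ⟨h1, h2, h3⟩ := ha i
        constructor
        · intro hi
          have : a i ≤ u k i := h2 (by rw [hmemZ]; simp [hi])
          simpa [hu, hi] using this
        · intro hi
          have : u k i ≤ a i := h1 (by rw [hmemZ]; simp [hi])
          simpa [hu, hi] using this
      · intro ha i
        refine ⟨?_, ?_, ?_⟩
        · intro hi
          rw [hmemZ] at hi
          have hnT : i ∉ T k := by simpa using hi.symm
          have := (ha i).2 hnT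
          simpa [hu, hnT] using this
        · intro hi
          rw [hmemZ] at hi
          have hiT : i ∈ T k := by simpa using hi.symm
          have := (ha i).1 hiT
          simpa [hu, hiT] using this
        · intro h1 h2
          exfalso
          rw [hmemZ] at h1 h2
          by_cases hi : i ∈ T k
          · exact h2 (by simp [hi])
          · exact h1 (by simp [hi])
    have hTsign : ∀ k (a : Fin n → ℤ), a ∈ stanleySet (u k) (Z k) →
        T k = A.filter (fun i => a i < 0) := by
      intro k a ha
      rw [hstan] at ha
      ext i
      simp only [Finset.mem_filter]
      constructor
      · intro hi
        exact ⟨hTA k hi, lt_of_le_of_lt ((ha i).1 hi) (by norm_num)⟩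
      · rintro ⟨-, hneg⟩
        by_contra hi
        exact absurd ((ha i).2 hi) (not_le.mpr hneg)
    refine ⟨r, u, Z, ⟨Finite.of_fintype _, ?_, ?_, ?_⟩, ?_⟩
    · intro k
      constructor
      · intro i hi
        rw [hmemZ] at hi
        exact hTA k (by simpa using hi.symm)
      · intro i ⟨h1, h2⟩
        rw [hmemZ] at h1 h2
        rw [← h2] at h1
        exact absurd h1 (by simp)
    · intro k k' hkk'
      rw [Set.disjoint_left]
      intro a hak hak'
      apply hkk'
      have hTT : T k = T k' := (hTsign k a hak).trans (hTsign k' a hak').symm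
      have : e.symm k = e.symm k' := Subtype.ext hTT
      simpa using congrArg e this
    · ext a
      simp only [Set.mem_iUnion]
      constructor
      · rintro ⟨k, hak⟩
        rw [hstan] at hak
        intro j hj
        exact (hak j).2 (fun hjT => hj (hTA k hjT))
      · intro haM
        set Ta : Finset (Fin n) := A.filter (fun i => a i < 0) with hTa
        have hTaP : Ta ∈ A.powerset := Finset.mem_powerset.mpr (Finset.filter_subset _ _)
        refine ⟨e ⟨Ta, hTaP⟩, ?_⟩
        rw [hstan]
        have hTk : T (e ⟨Ta, hTaP⟩) = Ta := by
          simp [hT]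
        intro i
        rw [hTk]
        constructor
        · intro hi
          have : a i < 0 := (Finset.mem_filter.mp hi).2
          omega
        · intro hi
          by_cases hiA : i ∈ A
          · by_contra hneg
            exact hi (Finset.mem_filter.mpr ⟨hiA, by omega⟩)
          · exact haM i hiA
    · intro k
      have hcard : (Z k).card = n := by
        rw [hZ]
        rw [Finset.card_image_of_injective _ (fun i j h => (Prod.ext_iff.mp h).1)]
        simp
      rw [hcard]
end

section
/- Let J ⊂ I ⊂ S be monomial ideals of S and let D : I/J = ⊕_{i=1}^r u_i K[Z_i] be a Stanley decomposition of I/J. Then D_f : (I/J)_f = ⊕_{i∈C} ⊕_{L⊆A} u_i f_L^{-1} K[Z_i^L] is a Stanley decomposition of the localization (I/J)_f, where C = {i : {x_j : j ∈ A} ⊆ Z_i}, f_L = ∏_{l∈L} x_l, and Z_i^L = {x_l^{-1} : l ∈ L, x_l ∈ Z_i} ∪ {x_l : l ∉ L, x_l ∈ Z_i}. -/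
/-! A monomial `b` of `S_f` lies in `(I/J)_f` iff `b f^k ∈ I \ J` for all large `k`. As the
decomposition is finite, some `u_i K[Z_i]` contains `b f^k` for infinitely many `k`, which forces
`x_j ∈ Z_i` for all `j ∈ A`; for such `i`, the monomials `b` with `b f^k ∈ u_i K[Z_i]` for some `k`
are split by the set `L` of those `j ∈ A` at which the exponent of `b` is below that of `u_i`,
and the part belonging to `L` is exactly `u_i f_L⁻¹ K[Z_i^L]`. -/

open Filter

theorem eventually_atTop_iff_exists_of_monotone {α : Type*} [Preorder α] [Nonempty α]
    [IsDirected α (· ≤ ·)] {p : α → Prop} (hp : Monotone p) :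
    (∀ᶠ x in atTop, p x) ↔ ∃ x, p x :=
  ⟨Eventually.exists, fun ⟨x, hx⟩ => eventually_atTop.2 ⟨x, fun _ hy => hp hy hx⟩⟩

section

variable {n : ℕ} {A L : Finset (Fin n)} {Z : Finset (Fin n × Bool)} {u b : Fin n → ℤ}

-- The exponent vector of `u f_L⁻¹` and the variable set `Z^L` of the paper.
def divByProd (u : Fin n → ℤ) (L : Finset (Fin n)) : Fin n → ℤ :=
  fun i => u i - if i ∈ L then 1 else 0

def invertVars (Z : Finset (Fin n × Bool)) (L : Finset (Fin n)) : Finset (Fin n × Bool) :=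
  Z.image fun q => (q.1, decide (q.1 ∉ L))

theorem add_smul_fVec_apply (k : ℤ) (j : Fin n) :
    (b + k • fVec A) j = b j + if j ∈ A then k else 0 := by
  simp [fVec]

theorem mem_stanleySet_iff_of_forall_notMem (hZ : ∀ j, (j, false) ∉ Z) {a : Fin n → ℤ} :
    a ∈ stanleySet u Z ↔ ∀ j, ((j, true) ∈ Z → u j ≤ a j) ∧ ((j, true) ∉ Z → a j = u j) := by
  simp [stanleySet, hZ]

theorem mem_invertVars (hZ : ∀ j, (j, false) ∉ Z) {j : Fin n} {t : Bool} :
    (j, t) ∈ invertVars Z L ↔ (j, true) ∈ Z ∧ t = decide (j ∉ L) := by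
  constructor
  · simp only [invertVars, Finset.mem_image, Prod.mk.injEq]
    rintro ⟨⟨j, (_ | _)⟩, hq, rfl, rfl⟩
    · exact absurd hq (hZ j)
    · exact ⟨hq, rfl⟩
  · rintro ⟨hj, rfl⟩
    exact Finset.mem_image_of_mem _ hj

theorem zOk_invertVars (hZ : ∀ j, (j, false) ∉ Z) (hL : L ⊆ A) : ZOk A (invertVars Z L) := by
  refine ⟨fun j hj => hL ?_, fun j ⟨ht, hf⟩ => ?_⟩
  · simpa using ((mem_invertVars hZ).1 hj).2
  · exact Bool.noConfusion (((mem_invertVars hZ).1 ht).2.trans ((mem_invertVars hZ).1 hf).2.symm)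

theorem mem_stanleySet_invertVars (hZ : ∀ j, (j, false) ∉ Z) (hLZ : ∀ j ∈ L, (j, true) ∈ Z) :
    b ∈ stanleySet (divByProd u L) (invertVars Z L) ↔
      ∀ j, (j ∈ L → b j < u j) ∧ (j ∉ L → (j, true) ∈ Z → u j ≤ b j) ∧
        ((j, true) ∉ Z → b j = u j) := by
  simp only [stanleySet, Set.mem_ofPred_eq, mem_invertVars hZ, divByProd]
  refine forall_congr' fun j => ?_
  by_cases hjL : j ∈ L
  · simp [hjL, hLZ j hjL]
  · by_cases hjZ : (j, true) ∈ Z <;> simp [hjL, hjZ]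

theorem monotone_add_smul_fVec_mem_stanleySet (hZ : ∀ j, (j, false) ∉ Z)
    (hA : ∀ j ∈ A, (j, true) ∈ Z) :
    Monotone fun k : ℕ => b + (k : ℤ) • fVec A ∈ stanleySet u Z := by
  intro k k' hk h
  simp only [mem_stanleySet_iff_of_forall_notMem hZ, add_smul_fVec_apply] at h ⊢
  intro j
  have hj := h j
  by_cases hjA : j ∈ A
  · simp only [hjA, hA j hjA, if_true, true_implies, not_true_eq_false, false_implies,
      and_true] at hj ⊢
    have : (k : ℤ) ≤ k' := by exact_mod_cast hk
    linarith
  · simpa [hjA] using hj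

theorem forall_mem_of_frequently_add_smul_fVec_mem_stanleySet (hZ : ∀ j, (j, false) ∉ Z)
    (h : ∃ᶠ k : ℕ in atTop, b + (k : ℤ) • fVec A ∈ stanleySet u Z) :
    ∀ j ∈ A, (j, true) ∈ Z := by
  intro j hjA
  by_contra hjZ
  obtain ⟨k, hk, hkZ⟩ := frequently_atTop.1 h ((u j - b j).toNat + 1)
  have hfix := ((mem_stanleySet_iff_of_forall_notMem hZ).1 hkZ j).2 hjZ
  rw [add_smul_fVec_apply, if_pos hjA] at hfix
  omega

theorem mem_stanleySet_invertVars_iff (hZ : ∀ j, (j, false) ∉ Z) (hA : ∀ j ∈ A, (j, true) ∈ Z)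
    (hL : L ⊆ A) :
    b ∈ stanleySet (divByProd u L) (invertVars Z L) ↔
      L = A.filter (fun j => b j < u j) ∧ ∃ k : ℕ, b + (k : ℤ) • fVec A ∈ stanleySet u Z := by
  rw [mem_stanleySet_invertVars hZ fun j hj => hA j (hL hj)]
  constructor
  · intro h
    have hL_eq : L = A.filter (fun j => b j < u j) := by
      ext j
      simp only [Finset.mem_filter]
      refine ⟨fun hj => ⟨hL hj, (h j).1 hj⟩, fun ⟨hjA, hlt⟩ => ?_⟩
      by_contra hjL
      exact absurd ((h j).2.1 hjL (hA j hjA)) (not_le.2 hlt)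
    obtain ⟨k, hk⟩ := (eventually_all_finset A).2
      (fun j _ => (tendsto_natCast_atTop_atTop (R := ℤ)).eventually_ge_atTop (u j - b j)) |>.exists
    refine ⟨hL_eq, k, (mem_stanleySet_iff_of_forall_notMem hZ).2 fun j => ?_⟩
    rw [add_smul_fVec_apply]
    by_cases hjA : j ∈ A
    · simp only [hjA, hA j hjA, if_true, true_implies, not_true_eq_false, false_implies,
        and_true]
      linarith [hk j hjA]
    · have hjL : j ∉ L := fun h => hjA (hL h)
      simpa [hjA, hjL] using (h j).2
  · rintro ⟨rfl, k, hk⟩ j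
    have hkj := (mem_stanleySet_iff_of_forall_notMem hZ).1 hk j
    rw [add_smul_fVec_apply] at hkj
    by_cases hjA : j ∈ A
    · simp [hjA, hA j hjA]
    · simpa [hjA] using hkj

end

theorem pairwise_disjoint_stanleySet_invertVars {n : ℕ} {A : Finset (Fin n)} {ι : Type*}
    {u : ι → Fin n → ℤ} {Z : ι → Finset (Fin n × Bool)} (hZ : ∀ i j, (j, false) ∉ Z i)
    (hdisj : Pairwise fun i j => Disjoint (stanleySet (u i) (Z i)) (stanleySet (u j) (Z j))) :
    Pairwise fun p q : {q : ι × Finset (Fin n) // (∀ j ∈ A, (j, true) ∈ Z q.1) ∧ q.2 ⊆ A} =>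
      Disjoint (stanleySet (divByProd (u p.1.1) p.1.2) (invertVars (Z p.1.1) p.1.2))
        (stanleySet (divByProd (u q.1.1) q.1.2) (invertVars (Z q.1.1) q.1.2)) := by
  rintro ⟨⟨i, L⟩, hC, hL⟩ ⟨⟨i', L'⟩, hC', hL'⟩ hne
  refine Set.disjoint_left.2 fun b hb hb' => hne ?_
  obtain ⟨hLb, k, hk⟩ := (mem_stanleySet_invertVars_iff (hZ i) hC hL).1 hb
  obtain ⟨hL'b, k', hk'⟩ := (mem_stanleySet_invertVars_iff (hZ i') hC' hL').1 hb'
  obtain rfl : i = i' := by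
    by_contra hii
    exact Set.disjoint_left.1 (hdisj hii)
      (monotone_add_smul_fVec_mem_stanleySet (hZ i) hC le_sup_left hk)
      (monotone_add_smul_fVec_mem_stanleySet (hZ i') hC' le_sup_right hk')
  exact Subtype.ext (Prod.ext rfl (hLb.trans hL'b.symm))

theorem IsMonomialIdeal.monotone_add_smul_fVec {n : ℕ} {A : Finset (Fin n)}
    {M : Set (Fin n → ℤ)} (hM : IsMonomialIdeal ∅ M) (b : Fin n → ℤ) :
    Monotone fun k : ℕ => b + (k : ℤ) • fVec A ∈ M := by
  intro k k' hk h
  have hc : ((k' : ℤ) - k) • fVec A ∈ SfMon ∅ := fun j _ => by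
    have : (k : ℤ) ≤ k' := by exact_mod_cast hk
    simp only [Pi.smul_apply, fVec, smul_eq_mul]
    split_ifs <;> linarith
  convert hM.2 _ h _ hc using 1
  rw [add_assoc, ← add_smul, add_sub_cancel]

theorem mem_locSet_diff_iff {n : ℕ} {A : Finset (Fin n)} {I J : Set (Fin n → ℤ)}
    (hI : IsMonomialIdeal ∅ I) (hJ : IsMonomialIdeal ∅ J) {b : Fin n → ℤ} :
    b ∈ locSet A I \ locSet A J ↔
      b ∈ SfMon A ∧ ∀ᶠ k : ℕ in atTop, b + (k : ℤ) • fVec A ∈ I \ J := by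
  constructor
  · rintro ⟨⟨hb, hbI⟩, hbJ⟩
    refine ⟨hb, ?_⟩
    filter_upwards [(eventually_atTop_iff_exists_of_monotone (hI.monotone_add_smul_fVec b)).2 hbI]
      with k hk using ⟨hk, fun hkJ => hbJ ⟨hb, k, hkJ⟩⟩
  · rintro ⟨hb, h⟩
    refine ⟨⟨hb, (h.mono fun _ hk => hk.1).exists⟩, fun ⟨_, hbJ⟩ => ?_⟩
    obtain ⟨k, hkJ, hk⟩ :=
      (((eventually_atTop_iff_exists_of_monotone (hJ.monotone_add_smul_fVec b)).2 hbJ).and h).exists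
    exact hk.2 hkJ

theorem eventually_add_smul_fVec_mem_iUnion_stanleySet_iff {n : ℕ} {A : Finset (Fin n)}
    {ι : Type*} [Finite ι] {u : ι → Fin n → ℤ} {Z : ι → Finset (Fin n × Bool)}
    (hZ : ∀ i j, (j, false) ∉ Z i) {b : Fin n → ℤ} :
    (∀ᶠ k : ℕ in atTop, b + (k : ℤ) • fVec A ∈ ⋃ i, stanleySet (u i) (Z i)) ↔
      ∃ i, (∀ j ∈ A, (j, true) ∈ Z i) ∧ ∃ k : ℕ, b + (k : ℤ) • fVec A ∈ stanleySet (u i) (Z i) := by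
  constructor
  · intro h
    simp only [Set.mem_iUnion] at h
    obtain ⟨i, hi⟩ := frequently_exists.1 h.frequently
    exact ⟨i, forall_mem_of_frequently_add_smul_fVec_mem_stanleySet (hZ i) hi, hi.exists⟩
  · rintro ⟨i, hA, hk⟩
    filter_upwards [(eventually_atTop_iff_exists_of_monotone
      (monotone_add_smul_fVec_mem_stanleySet (hZ i) hA)).2 hk] with k hk
    exact Set.mem_iUnion.2 ⟨i, hk⟩

theorem mem_sfMon_of_add_smul_fVec_mem {n : ℕ} {A : Finset (Fin n)} {b : Fin n → ℤ} {k : ℤ}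
    (h : b + k • fVec A ∈ SfMon ∅) : b ∈ SfMon A := fun j hj => by
  have hbj := h j (Finset.notMem_empty j)
  rwa [add_smul_fVec_apply, if_neg hj, add_zero] at hbj

theorem stanley_decomposition_localization_general {n : ℕ} (A : Finset (Fin n))
    (I J : Set (Fin n → ℤ))
    (hI : IsMonomialIdeal (∅ : Finset (Fin n)) I) (hJ : IsMonomialIdeal ∅ J)
    {r : ℕ} (u : Fin r → Fin n → ℤ) (Z : Fin r → Finset (Fin n × Bool))
    (hD : IsStanleyDecompOn ∅ (I \ J) u Z) :
    IsStanleyDecompOn A (locSet A I \ locSet A J)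
      (fun p : {q : Fin r × Finset (Fin n) // (∀ j ∈ A, (j, true) ∈ Z q.1) ∧ q.2 ⊆ A} =>
        fun i => u p.1.1 i - if i ∈ p.1.2 then 1 else 0)
      (fun p : {q : Fin r × Finset (Fin n) // (∀ j ∈ A, (j, true) ∈ Z q.1) ∧ q.2 ⊆ A} =>
        (Z p.1.1).image fun q => (q.1, decide (q.1 ∉ p.1.2))) := by
  obtain ⟨-, hZok, hdisj, hun⟩ := hD
  have hZ : ∀ i j, (j, false) ∉ Z i := fun i j h => Finset.notMem_empty j ((hZok i).1 j h)
  have hS : ∀ i, stanleySet (u i) (Z i) ⊆ SfMon ∅ := fun i =>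
    (Set.subset_iUnion _ i).trans (hun.le.trans (Set.sdiff_subset.trans hI.1))
  refine ⟨inferInstance, fun p => zOk_invertVars (hZ _) p.2.2,
    pairwise_disjoint_stanleySet_invertVars hZ hdisj, ?_⟩
  ext b
  rw [mem_locSet_diff_iff hI hJ, ← hun, eventually_add_smul_fVec_mem_iUnion_stanleySet_iff hZ]
  simp only [Set.mem_iUnion, Subtype.exists, Prod.exists]
  constructor
  · rintro ⟨i, L, ⟨hC, hL⟩, hb⟩
    obtain ⟨-, k, hk⟩ := (mem_stanleySet_invertVars_iff (hZ i) hC hL).1 hb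
    exact ⟨mem_sfMon_of_add_smul_fVec_mem (hS i hk), i, hC, k, hk⟩
  · rintro ⟨-, i, hC, k, hk⟩
    exact ⟨i, _, ⟨hC, Finset.filter_subset _ A⟩,
      (mem_stanleySet_invertVars_iff (hZ i) hC (Finset.filter_subset _ A)).2 ⟨rfl, k, hk⟩⟩

/-- Localization of a Stanley decomposition: if `D : I/J = ⊕_{i=1}^r u_i K[Z_i]` is a
Stanley decomposition of `I/J` for monomial ideals `J ⊂ I ⊂ S` (ambient parameter `A = ∅`),
then `D_f : (I/J)_f = ⊕_{i ∈ C} ⊕_{L ⊆ A} u_i f_L⁻¹ K[Z_i^L]` is a Stanley decomposition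
of `(I/J)_f`, where `C = {i : {x_j : j ∈ A} ⊆ Z_i}` and
`Z_i^L = {x_l⁻¹ : l ∈ L, x_l ∈ Z_i} ∪ {x_l : l ∉ L, x_l ∈ Z_i}`. -/
theorem stanley_decomposition_localization {n : ℕ} (A : Finset (Fin n))
    (I J : Set (Fin n → ℤ))
    (hI : IsMonomialIdeal (∅ : Finset (Fin n)) I) (hJ : IsMonomialIdeal ∅ J) (hJI : J ⊂ I)
    {r : ℕ} (u : Fin r → Fin n → ℤ) (Z : Fin r → Finset (Fin n × Bool))
    (hD : IsStanleyDecompOn ∅ (I \ J) u Z) :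
    IsStanleyDecompOn A (locSet A I \ locSet A J)
      (fun p : {q : Fin r × Finset (Fin n) // (∀ j ∈ A, (j, true) ∈ Z q.1) ∧ q.2 ⊆ A} =>
        fun i => u p.1.1 i - if i ∈ p.1.2 then 1 else 0)
      (fun p : {q : Fin r × Finset (Fin n) // (∀ j ∈ A, (j, true) ∈ Z q.1) ∧ q.2 ⊆ A} =>
        (Z p.1.1).image fun q => (q.1, decide (q.1 ∉ p.1.2))) :=
  stanley_decomposition_localization_general A I J hI hJ u Z hD
end

section
/- Let J ⊂ I ⊂ S_f be monomial ideals and t a new variable. Then sdepth((I/J)[t]) = sdepth((I/J)[t, t^{-1}]) = sdepth(I/J) + 1, where (I/J)[t] and (I/J)[t,t^{-1}] are the extensions of I/J to the polynomial ring S_f[t] and the Laurent polynomial extension S_f[t,t^{-1}], respectively. -/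
/-!
Everything is read off slices along the new variable `t`. A Stanley space `u·K[Z]` of `S_f[t]`
or `S_f[t, t⁻¹]` contains at most one of `t`, `t⁻¹`, so it is the product of a Stanley space
`u'·K[Z']` of `S_f` with a ray `{m}`, `m + ℕ` or `m - ℕ` of `t`-exponents, and
`|Z| ≤ |Z'| + 1`. Slicing a Stanley decomposition of the extension at `t = 0` gives one of `I/J`
losing at most one variable per space: this is `≤`. Conversely, multiplying every space of a
decomposition of `I/J` by `K[t]` (and, in the Laurent case, adding the spaces `t⁻¹·u·K[Z, t⁻¹]`)
gives `≥`, provided `I/J` has a Stanley decomposition at all. It does, by induction on `n`: if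
`x_n` is inverted, monomial ideals are cylinders over their slice at `x_n^0`; otherwise the
slices at `x_n^d` form an ascending chain of monomial ideals that becomes constant (Dickson's
lemma), so `I/J` is a finite disjoint union of slices times monomials and of one slice times
`x_n^D·K[x_n]`.
-/

open Finset Function

variable {n : ℕ}

namespace StanleyDepth

/-- `liftVars o Z` adjoins to `Z` the new variable `t` if `o = some true`, `t⁻¹` if
`o = some false`, and neither if `o = none`; `ray o m` is then the set of `t`-exponents of
`t^m·K[liftVars o Z]`. -/
def liftVars (o : Option Bool) (Z : Finset (Fin n × Bool)) : Finset (Fin (n + 1) × Bool) :=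
  Z.image (Prod.map Fin.castSucc id) ∪ (o.map (Fin.last n, ·)).toFinset

def ray : Option Bool → ℤ → Set ℤ
  | none, m => {m}
  | some true, m => Set.Ici m
  | some false, m => Set.Iic m

def restrictVars (Z : Finset (Fin (n + 1) × Bool)) : Finset (Fin n × Bool) :=
  univ.filter fun q => (q.1.castSucc, q.2) ∈ Z

@[simp]
lemma castSucc_mem_liftVars {o : Option Bool} {Z : Finset (Fin n × Bool)} {j : Fin n}
    {b : Bool} :
    (j.castSucc, b) ∈ liftVars o Z ↔ (j, b) ∈ Z := by
  cases o <;> simp [liftVars, Fin.castSucc_ne_last]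

@[simp]
lemma last_mem_liftVars {o : Option Bool} {Z : Finset (Fin n × Bool)} {b : Bool} :
    (Fin.last n, b) ∈ liftVars o Z ↔ o = some b := by
  cases o <;> simp [liftVars, Fin.castSucc_ne_last, eq_comm]

@[simp]
lemma mem_restrictVars {Z : Finset (Fin (n + 1) × Bool)} {j : Fin n} {b : Bool} :
    (j, b) ∈ restrictVars Z ↔ (j.castSucc, b) ∈ Z := by
  simp [restrictVars]

lemma card_liftVars_some (c : Bool) (Z : Finset (Fin n × Bool)) :
    (liftVars (some c) Z).card = Z.card + 1 := by
  rw [liftVars, card_union_of_disjoint, card_image_of_injective _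
    ((Fin.castSucc_injective n).prodMap injective_id)]
  · simp
  · simp [Fin.castSucc_ne_last]

lemma card_liftVars_le (o : Option Bool) (Z : Finset (Fin n × Bool)) :
    (liftVars o Z).card ≤ Z.card + 1 := by
  refine (card_union_le _ _).trans (add_le_add card_image_le ?_)
  cases o <;> simp

lemma exists_liftVars_restrictVars_eq {Z : Finset (Fin (n + 1) × Bool)}
    (hZ : ¬((Fin.last n, true) ∈ Z ∧ (Fin.last n, false) ∈ Z)) :
    ∃ o, liftVars o (restrictVars Z) = Z := by
  refine ⟨if (Fin.last n, true) ∈ Z then some true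
    else if (Fin.last n, false) ∈ Z then some false else none, ?_⟩
  ext ⟨i, b⟩
  induction i using Fin.lastCases with
  | last => cases b <;> split_ifs <;> simp_all
  | cast j => simp

/-- `{Fin.snoc b t | b ∈ M, t ∈ T}`. -/
def snocProd (M : Set (Fin n → ℤ)) (T : Set ℤ) : Set (Fin (n + 1) → ℤ) :=
  Fin.init ⁻¹' M ∩ (fun a => a (Fin.last n)) ⁻¹' T

lemma stanleySet_snoc_liftVars (o : Option Bool) (u : Fin n → ℤ) (m : ℤ)
    (Z : Finset (Fin n × Bool)) :
    stanleySet (Fin.snoc u m) (liftVars o Z) = snocProd (stanleySet u Z) (ray o m) := by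
  ext a
  simp only [stanleySet, snocProd, Set.mem_ofPred_eq, Set.mem_inter_iff, Set.mem_preimage,
    Fin.forall_fin_succ', castSucc_mem_liftVars, last_mem_liftVars, Fin.snoc_castSucc,
    Fin.snoc_last, Fin.init]
  rcases o with _ | _ | _ <;> simp [ray, eq_comm]

def sliceSet (M : Set (Fin (n + 1) → ℤ)) (m : ℤ) : Set (Fin n → ℤ) :=
  {b | Fin.snoc b m ∈ M}

lemma sliceSet_snocProd_of_mem {M : Set (Fin n → ℤ)} {T : Set ℤ} {m : ℤ} (hm : m ∈ T) :
    sliceSet (snocProd M T) m = M := by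
  ext b
  simp [sliceSet, snocProd, hm]

lemma snocProd_sliceSet {M : Set (Fin (n + 1) → ℤ)} {T : Set ℤ} {m : ℤ}
    (hT : ∀ t ∈ T, sliceSet M t = sliceSet M m) :
    snocProd (sliceSet M m) T = M ∩ (fun a => a (Fin.last n)) ⁻¹' T := by
  ext a
  simp only [snocProd, Set.mem_inter_iff, Set.mem_preimage, and_congr_left_iff]
  intro ht
  rw [← hT _ ht, sliceSet, Set.mem_ofPred_eq, Fin.snoc_init_self]

lemma snoc_add_snoc (b c : Fin n → ℤ) (x y : ℤ) :
    (Fin.snoc b x + Fin.snoc c y : Fin (n + 1) → ℤ) = Fin.snoc (b + c) (x + y) := by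
  ext i
  induction i using Fin.lastCases <;> simp

lemma stanleySet_empty (u : Fin n → ℤ) : stanleySet u ∅ = {u} := by
  ext a
  simp [stanleySet, funext_iff]

end StanleyDepth

open StanleyDepth

namespace ZOk

variable {A₀ : Finset (Fin n)} {A : Finset (Fin (n + 1))}

lemma liftVars {Z : Finset (Fin n × Bool)} (hZ : ZOk A₀ Z) (o : Option Bool)
    (hup : ∀ j ∈ A₀, j.castSucc ∈ A) (hlast : o = some false → Fin.last n ∈ A) :
    ZOk A (liftVars o Z) := by
  constructor <;> intro i <;> induction i using Fin.lastCases
  · simpa using hlast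
  · simpa using fun h => hup _ (hZ.1 _ h)
  · cases o <;> simp
  · simpa using hZ.2 _

lemma restrictVars {Z : Finset (Fin (n + 1) × Bool)} (hZ : ZOk A Z)
    (hdown : ∀ j : Fin n, j.castSucc ∈ A → j ∈ A₀) : ZOk A₀ (restrictVars Z) :=
  ⟨fun j h => hdown j (hZ.1 _ (mem_restrictVars.1 h)),
    fun j h => hZ.2 j.castSucc (by simpa using h)⟩

end ZOk

namespace IsStanleyDecompOn

variable {A₀ : Finset (Fin n)} {M : Set (Fin n → ℤ)} {ι : Type} {u : ι → Fin n → ℤ}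
  {Z : ι → Finset (Fin n × Bool)}

lemma comp_equiv (h : IsStanleyDecompOn A₀ M u Z) {κ : Type} (e : κ ≃ ι) :
    IsStanleyDecompOn A₀ M (u ∘ e) (Z ∘ e) := by
  obtain ⟨hfin, hok, hdisj, hcover⟩ := h
  refine ⟨.of_equiv ι e.symm, fun i => hok _, fun i j hij => hdisj (e.injective.ne hij), ?_⟩
  rw [← hcover]
  exact e.surjective.iUnion_comp fun i => stanleySet (u i) (Z i)

lemma subset (h : IsStanleyDecompOn A₀ M u Z) (i : ι) : stanleySet (u i) (Z i) ⊆ M :=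
  h.2.2.2 ▸ Set.subset_iUnion (fun i => stanleySet (u i) (Z i)) i

lemma le_sdepth (h : IsStanleyDecompOn A₀ M u Z) {k : ℕ∞} (hk : ∀ i, k ≤ (Z i).card) :
    k ≤ sdepth A₀ M := by
  have := h.1
  have := Fintype.ofFinite ι
  exact le_sSup ⟨_, _, _, h.comp_equiv (Fintype.equivFin ι).symm, fun i => hk _⟩

lemma iUnion {σ : Type} [Finite σ] {M : σ → Set (Fin n → ℤ)}
    (hM : Pairwise (Disjoint on M)) {ι : σ → Type} {u : ∀ s, ι s → Fin n → ℤ}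
    {Z : ∀ s, ι s → Finset (Fin n × Bool)}
    (h : ∀ s, IsStanleyDecompOn A₀ (M s) (u s) (Z s)) :
    IsStanleyDecompOn A₀ (⋃ s, M s) (fun p : Σ s, ι s => u p.1 p.2) fun p => Z p.1 p.2 := by
  have := fun s => (h s).1
  refine ⟨inferInstance, fun p => (h p.1).2.1 p.2, ?_, ?_⟩
  · rintro ⟨s, i⟩ ⟨t, j⟩ hne
    obtain rfl | hst := eq_or_ne s t
    · exact (h s).2.2.1 fun hij => hne (congrArg (Sigma.mk s) hij)
    · exact (hM hst).mono ((h s).subset i) ((h t).subset j)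
  · rw [Set.iUnion_sigma]
    exact Set.iUnion_congr fun s => (h s).2.2.2

variable {A : Finset (Fin (n + 1))}

lemma snoc (h : IsStanleyDecompOn A₀ M u Z) (o : Option Bool) (m : ℤ)
    (hup : ∀ j ∈ A₀, j.castSucc ∈ A) (hlast : o = some false → Fin.last n ∈ A) :
    IsStanleyDecompOn A (snocProd M (ray o m)) (fun i => Fin.snoc (u i) m)
      fun i => liftVars o (Z i) := by
  obtain ⟨hfin, hok, hdisj, hcover⟩ := h
  refine ⟨hfin, fun i => (hok i).liftVars o hup hlast, fun i j hij => ?_, ?_⟩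
  · simp only [stanleySet_snoc_liftVars, snocProd]
    exact ((hdisj hij).preimage _).mono Set.inter_subset_left Set.inter_subset_left
  · simp only [stanleySet_snoc_liftVars, snocProd, ← Set.iUnion_inter, ← Set.preimage_iUnion,
      hcover]

lemma preimage_init (h : IsStanleyDecompOn A₀ M u Z) (hup : ∀ j ∈ A₀, j.castSucc ∈ A)
    (hlast : Fin.last n ∈ A) :
    IsStanleyDecompOn A (Fin.init ⁻¹' M)
      (fun p : Σ _ : Bool, ι => Fin.snoc (u p.2) (if p.1 then 0 else -1))
      fun p => liftVars (some p.1) (Z p.2) := by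
  have hrays : Pairwise (Disjoint on fun c : Bool =>
      snocProd M (ray (some c) (if c then 0 else -1))) := by
    intro c c' hne
    refine Set.disjoint_left.2 fun a ha ha' => ?_
    cases c <;> cases c' <;>
      simp only [snocProd, ray, Bool.false_eq_true, Bool.true_eq_false, ↓reduceIte,
        Set.mem_inter_iff, Set.mem_preimage, Set.mem_Iic, Set.mem_Ici, ne_eq,
        not_true_eq_false] at ha ha' hne <;> omega
  convert iUnion hrays fun c => h.snoc (some c) _ hup fun _ => hlast
  ext a
  simp only [snocProd, Set.mem_iUnion, Set.mem_inter_iff, Set.mem_preimage, Bool.exists_bool]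
  simp only [ray, Bool.false_eq_true, if_false, if_true, Set.mem_Iic, Set.mem_Ici, ← and_or_left,
    iff_self_and]
  omega

lemma slice {M : Set (Fin (n + 1) → ℤ)} {u : ι → Fin (n + 1) → ℤ}
    {Z : ι → Finset (Fin (n + 1) × Bool)} (h : IsStanleyDecompOn A M u Z)
    {o : ι → Option Bool} (ho : ∀ i, liftVars (o i) (restrictVars (Z i)) = Z i)
    (hdown : ∀ j : Fin n, j.castSucc ∈ A → j ∈ A₀) (m : ℤ) :
    IsStanleyDecompOn A₀ (sliceSet M m)
      (fun i : {i // m ∈ ray (o i) (u i (Fin.last n))} => Fin.init (u i))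
      fun i => restrictVars (Z i) := by
  have hS : ∀ i, stanleySet (u i) (Z i) = snocProd
      (stanleySet (Fin.init (u i)) (restrictVars (Z i))) (ray (o i) (u i (Fin.last n))) := by
    intro i
    rw [← stanleySet_snoc_liftVars, ho, Fin.snoc_init_self]
  obtain ⟨hfin, hok, hdisj, hcover⟩ := h
  refine ⟨Subtype.finite, fun i => (hok i).restrictVars hdown, ?_, ?_⟩
  · rintro ⟨i, hi⟩ ⟨j, hj⟩ hij
    refine Set.disjoint_left.2 fun b hbi hbj => ?_
    have hij' : i ≠ j := fun h => hij (Subtype.ext h)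
    have hbi' : Fin.snoc b m ∈ stanleySet (u i) (Z i) := by
      rw [hS]; exact ⟨by simpa using hbi, by simpa using hi⟩
    have hbj' : Fin.snoc b m ∈ stanleySet (u j) (Z j) := by
      rw [hS]; exact ⟨by simpa using hbj, by simpa using hj⟩
    exact Set.disjoint_left.1 (hdisj hij') hbi' hbj'
  · ext b
    simp only [sliceSet, ← hcover, hS, Set.mem_iUnion, Subtype.exists, snocProd,
      Set.mem_ofPred_eq, Set.mem_inter_iff, Set.mem_preimage, Fin.init_snoc, Fin.snoc_last]
    exact exists_congr fun i => exists_prop.trans and_comm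

end IsStanleyDecompOn

def HasStanleyDecomp (A : Finset (Fin n)) (M : Set (Fin n → ℤ)) : Prop :=
  ∃ (ι : Type) (u : ι → Fin n → ℤ) (Z : ι → Finset (Fin n × Bool)),
    IsStanleyDecompOn A M u Z

namespace HasStanleyDecomp

lemma of_finite {A : Finset (Fin n)} {M : Set (Fin n → ℤ)} (hM : M.Finite) :
    HasStanleyDecomp A M := by
  refine ⟨M, Subtype.val, fun _ => ∅, hM.to_subtype, fun _ => ⟨by simp, by simp⟩, ?_, ?_⟩
  · intro a b hab
    simpa [stanleySet_empty, Subtype.val_inj] using hab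
  · simp [stanleySet_empty]

lemma iUnion {A : Finset (Fin n)} {σ : Type} [Finite σ] {M : σ → Set (Fin n → ℤ)}
    (hM : Pairwise (Disjoint on M)) (h : ∀ s, HasStanleyDecomp A (M s)) :
    HasStanleyDecomp A (⋃ s, M s) := by
  choose ι u Z hd using h
  exact ⟨_, _, _, IsStanleyDecompOn.iUnion hM hd⟩

variable {A₀ : Finset (Fin n)} {A : Finset (Fin (n + 1))} {M : Set (Fin n → ℤ)}

lemma snoc (h : HasStanleyDecomp A₀ M) (o : Option Bool) (m : ℤ)
    (hup : ∀ j ∈ A₀, j.castSucc ∈ A) (hlast : o = some false → Fin.last n ∈ A) :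
    HasStanleyDecomp A (snocProd M (ray o m)) :=
  let ⟨_, _, _, hd⟩ := h
  ⟨_, _, _, hd.snoc o m hup hlast⟩

lemma preimage_init (h : HasStanleyDecomp A₀ M) (hup : ∀ j ∈ A₀, j.castSucc ∈ A)
    (hlast : Fin.last n ∈ A) : HasStanleyDecomp A (Fin.init ⁻¹' M) :=
  let ⟨_, _, _, hd⟩ := h
  ⟨_, _, _, hd.preimage_init hup hlast⟩

end HasStanleyDecomp

/-- `M` is the disjoint union of its slices at `t = d < D` and of (slice at `D`) × `[D, ∞)`. -/
lemma hasStanleyDecomp_of_sliceSet_eq {A₀ : Finset (Fin n)} {A : Finset (Fin (n + 1))}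
    (hup : ∀ j ∈ A₀, j.castSucc ∈ A) {M : Set (Fin (n + 1) → ℤ)}
    (hM : ∀ a ∈ M, 0 ≤ a (Fin.last n)) (D : ℕ)
    (hD : ∀ t : ℤ, D ≤ t → sliceSet M t = sliceSet M D)
    (hslice : ∀ t, HasStanleyDecomp A₀ (sliceSet M t)) : HasStanleyDecomp A M := by
  let base : Option (Fin D) → ℤ := fun s => s.elim D fun d => d
  let dir : Option (Fin D) → Option Bool := fun s => s.elim (some true) fun _ => none
  have hpieces : ∀ s, snocProd (sliceSet M (base s)) (ray (dir s) (base s)) =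
      M ∩ (fun a => a (Fin.last n)) ⁻¹' ray (dir s) (base s) := by
    rintro (_ | d)
    · exact snocProd_sliceSet hD
    · exact snocProd_sliceSet fun t ht => congrArg _ ht
  have hdisj : Pairwise (Disjoint on fun s => ray (dir s) (base s)) := by
    rintro (_ | d) (_ | d') hne <;> refine Set.disjoint_left.2 fun t h1 h2 => ?_ <;>
      simp only [ray, base, dir, Option.elim_none, Option.elim_some, Set.mem_Ici,
        Set.mem_singleton_iff, ne_eq, Option.some.injEq, reduceCtorEq, not_true_eq_false,
        not_false_eq_true] at h1 h2 hne
    · omega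
    · omega
    · exact hne (Fin.ext (by omega))
  have hcover : M = ⋃ s, M ∩ (fun a => a (Fin.last n)) ⁻¹' ray (dir s) (base s) := by
    ext a
    simp only [Set.mem_iUnion, Set.mem_inter_iff, Set.mem_preimage, exists_and_left,
      iff_self_and]
    intro ha
    have h0 := hM a ha
    by_cases hlt : a (Fin.last n) < D
    · refine ⟨some ⟨(a (Fin.last n)).toNat, by omega⟩, ?_⟩
      simp only [ray, base, dir, Option.elim_some, Set.mem_singleton_iff]
      omega
    · exact ⟨none, show (D : ℤ) ≤ a (Fin.last n) by omega⟩
  rw [hcover]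
  refine HasStanleyDecomp.iUnion (fun s t hst => ((hdisj hst).preimage _).mono
    Set.inter_subset_right Set.inter_subset_right) fun s => ?_
  rw [← hpieces]
  exact (hslice _).snoc _ _ hup fun h => by cases s <;> simp [dir] at h

namespace IsMonomialIdeal

lemma mem_iff_toNat_mem {A : Finset (Fin n)} {M : Set (Fin n → ℤ)} (hM : IsMonomialIdeal A M)
    {a : Fin n → ℤ} (ha : a ∈ SfMon A) :
    a ∈ M ↔ (fun i => ((a i).toNat : ℤ)) ∈ M := by
  set a' : Fin n → ℤ := fun i => ((a i).toNat : ℤ)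
  constructor <;> intro h
  · simpa using hM.2 a h (a' - a) fun i _ => by simp [a']
  · simpa using hM.2 a' h (a - a') fun i hi => by simp [a', ha i hi]

/-- A monomial ideal of `S_f` is determined by its exponent vectors in `ℕⁿ`, which form a
semigroup ideal of `ℕⁿ`; these satisfy the ascending chain condition by Dickson's lemma. -/
theorem eventually_const {A : Finset (Fin n)} {F : ℕ → Set (Fin n → ℤ)}
    (hF : ∀ d, IsMonomialIdeal A (F d)) (hmono : Monotone F) :
    ∃ D, ∀ d, D ≤ d → F d = F D := by
  let G : ℕ →o AddSemigroupIdeal (Fin n → ℕ) :=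
    { toFun d :=
        { carrier := {v | (fun i => (v i : ℤ)) ∈ F d}
          vadd_mem' c v hv := by
            show (fun i => ((c i + v i : ℕ) : ℤ)) ∈ F d
            convert (hF d).2 _ hv (fun i => c i) fun i _ => by positivity using 1
            ext i
            simp [add_comm] }
      monotone' d e hde v hv := hmono hde hv }
  obtain ⟨D, hD⟩ := WellFoundedGT.monotone_chain_condition G
  refine ⟨D, fun d hd => Set.ext fun a => ?_⟩
  by_cases ha : a ∈ SfMon A
  · rw [(hF d).mem_iff_toNat_mem ha, (hF D).mem_iff_toNat_mem ha]
    exact (SetLike.ext_iff.mp (hD d hd) fun i => (a i).toNat).symm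
  · exact iff_of_false (fun h => ha ((hF d).1 h)) fun h => ha ((hF D).1 h)

variable {A : Finset (Fin (n + 1))} {I : Set (Fin (n + 1) → ℤ)}

lemma snoc_mem_of_snoc_mem (hI : IsMonomialIdeal A I) {b : Fin n → ℤ} {m m' : ℤ}
    (hb : Fin.snoc b m ∈ I) (hm : Fin.last n ∉ A → m ≤ m') : Fin.snoc b m' ∈ I := by
  have hc : (Fin.snoc 0 (m' - m) : Fin (n + 1) → ℤ) ∈ SfMon A := by
    intro i hi
    induction i using Fin.lastCases with
    | last => simpa using hm hi
    | cast j => simp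
  simpa [snoc_add_snoc] using hI.2 _ hb _ hc

lemma preimage_init_sliceSet (hI : IsMonomialIdeal A I) (hlast : Fin.last n ∈ A) (m : ℤ) :
    Fin.init ⁻¹' sliceSet I m = I := by
  ext a
  conv_rhs => rw [← Fin.snoc_init_self a]
  exact ⟨fun h => hI.snoc_mem_of_snoc_mem h (absurd hlast),
    fun h => hI.snoc_mem_of_snoc_mem h (absurd hlast)⟩

lemma slice (hI : IsMonomialIdeal A I) (m : ℤ) :
    IsMonomialIdeal (univ.filter fun j : Fin n => j.castSucc ∈ A) (sliceSet I m) := by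
  refine ⟨fun b hb j hj => ?_, fun b hb c hc => ?_⟩
  · simpa using hI.1 hb j.castSucc (by simpa using hj)
  · have hc' : (Fin.snoc c 0 : Fin (n + 1) → ℤ) ∈ SfMon A := by
      intro i hi
      induction i using Fin.lastCases with
      | last => simp
      | cast j => simpa using hc j (by simpa using hi)
    simpa [sliceSet, snoc_add_snoc] using hI.2 _ hb _ hc'

lemma exists_sliceSet_eq (hI : IsMonomialIdeal A I) :
    ∃ D : ℕ, ∀ t : ℤ, D ≤ t → sliceSet I t = sliceSet I D := by
  obtain ⟨D, hD⟩ := eventually_const (fun d : ℕ => hI.slice d)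
    fun d e hde b hb => hI.snoc_mem_of_snoc_mem hb fun _ => by exact_mod_cast hde
  refine ⟨D, fun t ht => ?_⟩
  lift t to ℕ using by omega
  exact hD t (by exact_mod_cast ht)

end IsMonomialIdeal

theorem IsMonomialIdeal.hasStanleyDecomp_diff {A : Finset (Fin n)} {I J : Set (Fin n → ℤ)}
    (hI : IsMonomialIdeal A I) (hJ : IsMonomialIdeal A J) : HasStanleyDecomp A (I \ J) := by
  induction n with
  | zero => exact .of_finite (Set.toFinite _)
  | succ n ih =>
    have hup : ∀ j ∈ univ.filter fun j : Fin n => j.castSucc ∈ A, j.castSucc ∈ A := by simp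
    have hslice t := ih (hI.slice t) (hJ.slice t)
    by_cases hlast : Fin.last n ∈ A
    · rw [← hI.preimage_init_sliceSet hlast 0, ← hJ.preimage_init_sliceSet hlast 0,
        ← Set.preimage_sdiff]
      exact (hslice 0).preimage_init hup hlast
    · obtain ⟨DI, hDI⟩ := hI.exists_sliceSet_eq
      obtain ⟨DJ, hDJ⟩ := hJ.exists_sliceSet_eq
      refine hasStanleyDecomp_of_sliceSet_eq hup (fun a ha => hI.1 ha.1 _ hlast) (max DI DJ)
        (fun t ht => ?_) hslice
      change sliceSet I t \ sliceSet J t = sliceSet I _ \ sliceSet J _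
      rw [hDI t (by omega), hDI (max DI DJ : ℕ) (by omega), hDJ t (by omega),
        hDJ (max DI DJ : ℕ) (by omega)]

section sdepth

variable {A₀ : Finset (Fin n)} {A : Finset (Fin (n + 1))}

lemma sdepth_le_sdepth_sliceSet_add_one (hdown : ∀ j : Fin n, j.castSucc ∈ A → j ∈ A₀)
    (M : Set (Fin (n + 1) → ℤ)) (m : ℤ) : sdepth A M ≤ sdepth A₀ (sliceSet M m) + 1 := by
  refine sSup_le ?_
  rintro k ⟨r, u, Z, hd, hk⟩
  choose o ho using fun i => exists_liftVars_restrictVars_eq ((hd.2.1 i).2 (Fin.last n))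
  refine le_tsub_add.trans (add_le_add_left ((hd.slice ho hdown m).le_sdepth fun i => ?_) 1)
  have hcard := card_liftVars_le (o i) (restrictVars (Z i))
  rw [ho] at hcard
  exact tsub_le_iff_right.2 ((hk i).trans (mod_cast hcard))

lemma sdepth_add_one_le {M : Set (Fin n → ℤ)} (hM : HasStanleyDecomp A₀ M) {s : ℕ∞}
    (h : ∀ (r : ℕ) (u : Fin r → Fin n → ℤ) (Z : Fin r → Finset (Fin n × Bool)),
      IsStanleyDecompOn A₀ M u Z → ∀ k : ℕ∞, (∀ i, k ≤ (Z i).card) → k + 1 ≤ s) :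
    sdepth A₀ M + 1 ≤ s := by
  rw [sdepth, ENat.sSup_add]
  · exact iSup₂_le fun k ⟨r, u, Z, hd, hk⟩ => h r u Z hd k hk
  · obtain ⟨ι, u, Z, hd⟩ := hM
    have := hd.1
    have := Fintype.ofFinite ι
    exact ⟨0, _, _, _, hd.comp_equiv (Fintype.equivFin ι).symm, fun _ => zero_le⟩

theorem sdepth_snocProd_Ici_zero (hup : ∀ j ∈ A₀, j.castSucc ∈ A)
    (hdown : ∀ j : Fin n, j.castSucc ∈ A → j ∈ A₀) {M : Set (Fin n → ℤ)}
    (hM : HasStanleyDecomp A₀ M) : sdepth A (snocProd M (Set.Ici 0)) = sdepth A₀ M + 1 := by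
  refine le_antisymm ?_ (sdepth_add_one_le hM fun r u Z hd k hk => ?_)
  · simpa [sliceSet_snocProd_of_mem] using
      sdepth_le_sdepth_sliceSet_add_one hdown (snocProd M (Set.Ici 0)) 0
  · refine (hd.snoc (some true) 0 hup (by simp)).le_sdepth fun i => ?_
    rw [card_liftVars_some, Nat.cast_add, Nat.cast_one]
    exact add_le_add_left (hk i) 1

theorem sdepth_preimage_init (hup : ∀ j ∈ A₀, j.castSucc ∈ A)
    (hdown : ∀ j : Fin n, j.castSucc ∈ A → j ∈ A₀) (hlast : Fin.last n ∈ A)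
    {M : Set (Fin n → ℤ)} (hM : HasStanleyDecomp A₀ M) :
    sdepth A (Fin.init ⁻¹' M) = sdepth A₀ M + 1 := by
  refine le_antisymm ?_ (sdepth_add_one_le hM fun r u Z hd k hk => ?_)
  · simpa [sliceSet] using sdepth_le_sdepth_sliceSet_add_one hdown (Fin.init ⁻¹' M) 0
  · refine (hd.preimage_init hup hlast).le_sdepth fun i => ?_
    rw [card_liftVars_some, Nat.cast_add, Nat.cast_one]
    exact add_le_add_left (hk i.2) 1

end sdepth

/-- The new variable `t` is the last index of `Fin (n + 1)`; the ambient ring of `(I/J)[t]` is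
`S_f[t]` (localizing set `A`) and that of `(I/J)[t, t⁻¹]` is `S_f[t, t⁻¹]` (localizing set
`A ∪ {t}`). -/
theorem sdepth_polynomial_and_laurent_extension_general {n : ℕ} (A : Finset (Fin n))
    (I J : Set (Fin n → ℤ))
    (hI : IsMonomialIdeal A I) (hJ : IsMonomialIdeal A J) :
    sdepth (A.image Fin.castSucc)
        {a : Fin (n + 1) → ℤ | Fin.init a ∈ I \ J ∧ 0 ≤ a (Fin.last n)} =
      sdepth A (I \ J) + 1 ∧
    sdepth (insert (Fin.last n) (A.image Fin.castSucc))
        {a : Fin (n + 1) → ℤ | Fin.init a ∈ I \ J} =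
      sdepth A (I \ J) + 1 := by
  have hdecomp := hI.hasStanleyDecomp_diff hJ
  have hup : ∀ j ∈ A, j.castSucc ∈ A.image Fin.castSucc := fun j => mem_image_of_mem _
  have hdown : ∀ j : Fin n, j.castSucc ∈ A.image Fin.castSucc → j ∈ A :=
    fun j => (Fin.castSucc_injective n).mem_finset_image.1
  refine ⟨sdepth_snocProd_Ici_zero hup hdown hdecomp,
    sdepth_preimage_init (fun j hj => mem_insert_of_mem (hup j hj)) (fun j hj => ?_)
      (mem_insert_self _ _) hdecomp⟩
  exact hdown j ((mem_insert.1 hj).resolve_left (Fin.castSucc_ne_last j))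

/-- For monomial ideals `J ⊂ I ⊂ S_f` and a new variable `t` (encoded as the last index
of `Fin (n+1)`): `sdepth (I/J)[t] = sdepth (I/J)[t, t⁻¹] = sdepth I/J + 1`.  For `(I/J)[t]`
the ambient ring is `S_f[t]` (localizing set `A`, mapped into `Fin (n+1)`), and for
`(I/J)[t, t⁻¹]` it is `S_f[t, t⁻¹]` (localizing set `A ∪ {t}`). -/
theorem sdepth_polynomial_and_laurent_extension {n : ℕ} (A : Finset (Fin n))
    (I J : Set (Fin n → ℤ))
    (hI : IsMonomialIdeal A I) (hJ : IsMonomialIdeal A J) (hJI : J ⊂ I) :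
    sdepth (A.image Fin.castSucc)
        {a : Fin (n + 1) → ℤ | Fin.init a ∈ I \ J ∧ 0 ≤ a (Fin.last n)} =
      sdepth A (I \ J) + 1 ∧
    sdepth (insert (Fin.last n) (A.image Fin.castSucc))
        {a : Fin (n + 1) → ℤ | Fin.init a ∈ I \ J} =
      sdepth A (I \ J) + 1 :=
  sdepth_polynomial_and_laurent_extension_general A I J hI hJ
end

section
/- Let J ⊂ I ⊂ S_f be monomial ideals, let S' = K[x_i : i ∉ A] ⊆ S, and let J' ⊂ I' ⊂ S' be monomial ideals with J = J'·S_f and I = I'·S_f. Then I/J = (I'/J')[x_i^{±1} : i ∈ A] and consequently sdepth(I/J) = sdepth(I'/J') + |A|. -/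
/-- Exponent vectors of the monomials of `S' = K[x_i : i ∉ A] ⊆ S`. -/
def SpMon {n : ℕ} (A : Finset (Fin n)) : Set (Fin n → ℤ) :=
  {a | ∀ i : Fin n, 0 ≤ a i ∧ (i ∈ A → a i = 0)}

/-!
A monomial `b` of `S_f` lies in `I/J` exactly when the monomial obtained by setting its
`A`-exponents to zero lies in `I'/J'`. A Stanley space `u·K[Z]` of `I'/J'` therefore lifts to
the `2^|A|` Stanley spaces of `I/J` obtained by choosing, for each `i ∈ A`, either `x_i`
(exponents `≥ 0`) or `x_i⁻¹` (exponents `≤ -1`), which raises the depth by `|A|`. Conversely,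
cutting a Stanley decomposition of `I/J` with the slice `b_i = 0` (`i ∈ A`) gives one of `I'/J'`
losing at most one variable per `i ∈ A`. The lift needs some Stanley decomposition of `I'/J'`:
by Dickson's lemma there is a `g` bounding the minimal generators of `I'` and `J'`, and then the
fibres of `a ↦ a ⊓ g` are Stanley spaces partitioning `I'/J'`.
-/

variable {n : ℕ}

section Stanley

lemma self_mem_stanleySet (u : Fin n → ℤ) (Z : Finset (Fin n × Bool)) :
    u ∈ stanleySet u Z :=
  fun _ => ⟨fun _ => le_rfl, fun _ => le_rfl, fun _ _ => rfl⟩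

lemma update_mem_stanleySet {u : Fin n → ℤ} {Z : Finset (Fin n × Bool)} {j : Fin n}
    (hj : (j, true) ∈ Z) (hj' : (j, false) ∉ Z) {t : ℤ} (ht : u j ≤ t) :
    Function.update u j t ∈ stanleySet u Z := by
  intro i
  rcases eq_or_ne i j with rfl | hij
  · simp [ht, hj, hj']
  · simp [hij]

lemma IsStanleyDecompOn.stanleySet_subset {A : Finset (Fin n)} {M : Set (Fin n → ℤ)}
    {ι : Type} {u : ι → Fin n → ℤ} {Z : ι → Finset (Fin n × Bool)}
    (h : IsStanleyDecompOn A M u Z) (i : ι) : stanleySet (u i) (Z i) ⊆ M :=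
  h.2.2.2 ▸ Set.subset_iUnion (fun i => stanleySet (u i) (Z i)) i

lemma IsStanleyDecompOn.exists_fin {A : Finset (Fin n)} {M : Set (Fin n → ℤ)} {ι : Type}
    {u : ι → Fin n → ℤ} {Z : ι → Finset (Fin n × Bool)} (h : IsStanleyDecompOn A M u Z) :
    ∃ (r : ℕ) (e : Fin r ≃ ι), IsStanleyDecompOn A M (u ∘ e) (Z ∘ e) := by
  obtain ⟨hfin, hZ, hdisj, hcover⟩ := h
  have := Fintype.ofFinite ι
  let e := (Fintype.equivFin ι).symm
  refine ⟨_, e, inferInstance, fun i => hZ _, fun i j hij => hdisj (e.injective.ne hij), ?_⟩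
  rw [← hcover]
  exact e.surjective.iUnion_comp fun i => stanleySet (u i) (Z i)

lemma le_sdepth {A : Finset (Fin n)} {M : Set (Fin n → ℤ)} {ι : Type}
    {u : ι → Fin n → ℤ} {Z : ι → Finset (Fin n × Bool)}
    (h : IsStanleyDecompOn A M u Z) {k : ℕ∞} (hk : ∀ i, k ≤ (Z i).card) : k ≤ sdepth A M := by
  obtain ⟨r, e, he⟩ := h.exists_fin
  exact le_sSup ⟨r, _, _, he, fun i => hk _⟩

end Stanley

section Extension

variable {A : Finset (Fin n)}

def zeroOn (A : Finset (Fin n)) (b : Fin n → ℤ) : Fin n → ℤ := fun i => if i ∈ A then 0 else b i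

/-- `N[x_i^{±1} : i ∈ A]` for a monomial subspace `N` of `S'`. -/
def laurentExt (A : Finset (Fin n)) (N : Set (Fin n → ℤ)) : Set (Fin n → ℤ) :=
  {b ∈ SfMon A | zeroOn A b ∈ N}

def IsMonomialIdealSp (A : Finset (Fin n)) (M : Set (Fin n → ℤ)) : Prop :=
  M ⊆ SpMon A ∧ ∀ a ∈ M, ∀ c ∈ SpMon A, a + c ∈ M

lemma laurentExt_diff (M N : Set (Fin n → ℤ)) :
    laurentExt A M \ laurentExt A N = laurentExt A (M \ N) := by
  ext b
  simp only [laurentExt, Set.mem_sdiff, Set.mem_ofPred_eq]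
  tauto

lemma zeroOn_mem_SpMon {b : Fin n → ℤ} (hb : b ∈ SfMon A) : zeroOn A b ∈ SpMon A := by
  intro i
  by_cases hi : i ∈ A <;> simp [zeroOn, hi, hb i]

lemma zeroOn_add_of_mem_SpMon {a : Fin n → ℤ} (ha : a ∈ SpMon A) (c : Fin n → ℤ) :
    zeroOn A (a + c) = a + zeroOn A c := by
  ext i
  by_cases hi : i ∈ A <;> simp [zeroOn, hi, (ha i).2]

lemma IsMonomialIdealSp.extension_eq {M : Set (Fin n → ℤ)} (hM : IsMonomialIdealSp A M) :
    {b | ∃ a ∈ M, ∃ c ∈ SfMon A, b = a + c} = laurentExt A M := by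
  ext b
  constructor
  · rintro ⟨a, ha, c, hc, rfl⟩
    have haSp := hM.1 ha
    refine ⟨fun i hi => add_nonneg (haSp i).1 (hc i hi), ?_⟩
    rw [zeroOn_add_of_mem_SpMon haSp]
    exact hM.2 a ha _ (zeroOn_mem_SpMon hc)
  · rintro ⟨hb, hbM⟩
    refine ⟨zeroOn A b, hbM, b - zeroOn A b, fun i hi => ?_, by abel⟩
    simp [zeroOn, hi]

end Extension

section Existence

variable {A : Finset (Fin n)}

lemma sub_mem_SpMon {a b : Fin n → ℤ} (ha : a ∈ SpMon A) (hb : b ∈ SpMon A) (hab : a ≤ b) :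
    b - a ∈ SpMon A := fun i =>
  ⟨sub_nonneg.2 (hab i), fun hi => by simp [(ha i).2 hi, (hb i).2 hi]⟩

lemma inf_mem_SpMon {a g : Fin n → ℤ} (ha : a ∈ SpMon A) (hg : 0 ≤ g) : a ⊓ g ∈ SpMon A :=
  fun i => ⟨le_inf (ha i).1 (hg i), fun hi => by simpa [(ha i).2 hi] using hg i⟩

lemma IsMonomialIdealSp.mem_of_le {M : Set (Fin n → ℤ)} (hM : IsMonomialIdealSp A M)
    {a b : Fin n → ℤ} (ha : a ∈ M) (hb : b ∈ SpMon A) (hab : a ≤ b) : b ∈ M := by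
  simpa using hM.2 a ha (b - a) (sub_mem_SpMon (hM.1 ha) hb hab)

/-- Dickson's lemma: `M` has finitely many minimal elements. -/
lemma exists_bound_minimal {M : Set (Fin n → ℤ)} (hM : M ⊆ SpMon A) :
    ∃ g, ∀ a ∈ M, ∃ f ∈ M, f ≤ a ∧ f ≤ g := by
  have hpwo : M.IsPWO := by
    refine ((Set.isPWO_of_wellQuasiOrderedLE (Set.univ : Set (Fin n → ℕ))).image_of_monotone
      (f := fun c i => (c i : ℤ)) fun c d h i => Int.ofNat_le.2 (h i)).mono fun a ha => ?_
    exact ⟨fun i => (a i).toNat, trivial, funext fun i => Int.toNat_of_nonneg (hM ha i).1⟩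
  have hfin : {f | Minimal (· ∈ M) f}.Finite :=
    (setOfPred_minimal_antichain _).finite_of_partiallyWellOrderedOn
      (hpwo.mono fun _ hf => hf.1)
  obtain ⟨g, hg⟩ := hfin.bddAbove
  refine ⟨g, fun a ha => ?_⟩
  obtain ⟨f, hfa, hf⟩ := hpwo.exists_le_minimal ha
  exact ⟨f, hf.1, hfa, hg hf⟩

lemma IsMonomialIdealSp.mem_iff_inf_mem {M : Set (Fin n → ℤ)} (hM : IsMonomialIdealSp A M)
    {g : Fin n → ℤ} (hg0 : 0 ≤ g) (hg : ∀ a ∈ M, ∃ f ∈ M, f ≤ a ∧ f ≤ g)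
    {a : Fin n → ℤ} (ha : a ∈ SpMon A) : a ∈ M ↔ a ⊓ g ∈ M := by
  refine ⟨fun haM => ?_, fun hag => hM.mem_of_le hag ha inf_le_left⟩
  obtain ⟨f, hfM, hfa, hfg⟩ := hg a haM
  exact hM.mem_of_le hfM (inf_mem_SpMon ha hg0) (le_inf hfa hfg)

def truncVars (A : Finset (Fin n)) (g b : Fin n → ℤ) : Finset (Fin n × Bool) :=
  {p | p.2 = true ∧ p.1 ∉ A ∧ b p.1 = g p.1}

lemma mem_stanleySet_truncVars_iff {g b : Fin n → ℤ} (hb : b ∈ SpMon A) (hbg : b ≤ g)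
    {a : Fin n → ℤ} : a ∈ stanleySet b (truncVars A g b) ↔ a ∈ SpMon A ∧ a ⊓ g = b := by
  simp only [stanleySet, truncVars, Set.mem_ofPred_eq, Finset.mem_filter, Finset.mem_univ,
    true_and, Bool.false_eq_true, false_and, not_false_eq_true, forall_const]
  rw [SpMon, Set.mem_ofPred_eq, funext_iff, ← forall_and]
  refine forall_congr' fun i => ?_
  obtain ⟨hb0, hbA⟩ := hb i
  have hbgi := hbg i
  by_cases hi : i ∈ A <;> by_cases hbi : b i = g i <;> simp [hi, hbi] <;> grind

lemma exists_isStanleyDecompOn_diff {I J : Set (Fin n → ℤ)} (hI : IsMonomialIdealSp A I)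
    (hJ : IsMonomialIdealSp A J) :
    ∃ (ι : Type) (u : ι → Fin n → ℤ) (Z : ι → Finset (Fin n × Bool)),
      IsStanleyDecompOn ∅ (I \ J) u Z := by
  obtain ⟨gI, hgI⟩ := exists_bound_minimal hI.1
  obtain ⟨gJ, hgJ⟩ := exists_bound_minimal hJ.1
  set g := gI ⊔ gJ ⊔ 0
  have hg0 : 0 ≤ g := le_sup_right
  have hmem : ∀ a ∈ SpMon A, (a ∈ I \ J ↔ a ⊓ g ∈ I \ J) := by
    intro a ha
    rw [Set.mem_sdiff, Set.mem_sdiff, hI.mem_iff_inf_mem hg0 ?_ ha, hJ.mem_iff_inf_mem hg0 ?_ ha]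
    · intro c hc
      obtain ⟨f, hf, hfc, hfg⟩ := hgJ c hc
      exact ⟨f, hf, hfc, hfg.trans (le_sup_right.trans le_sup_left)⟩
    · intro c hc
      obtain ⟨f, hf, hfc, hfg⟩ := hgI c hc
      exact ⟨f, hf, hfc, hfg.trans (le_sup_left.trans le_sup_left)⟩
  set B := (· ⊓ g) '' (I \ J)
  have hB : ∀ b ∈ B, b ∈ SpMon A ∧ b ≤ g := by
    rintro _ ⟨a, ha, rfl⟩
    exact ⟨inf_mem_SpMon (hI.1 ha.1) hg0, inf_le_right⟩
  have hpiece : ∀ b : B, ∀ a, a ∈ stanleySet b (truncVars A g b) ↔ a ∈ SpMon A ∧ a ⊓ g = b :=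
    fun b a => mem_stanleySet_truncVars_iff (hB b b.2).1 (hB b b.2).2
  refine ⟨B, fun b => b, fun b => truncVars A g b, ?_, fun b => ?_, fun b c hbc => ?_, ?_⟩
  · refine Set.Finite.to_subtype ((Set.finite_Icc 0 g).subset fun b hb => ?_)
    exact ⟨((hB b hb).1 · |>.1), (hB b hb).2⟩
  · constructor <;> simp [truncVars]
  · refine Set.disjoint_left.2 fun a ha hc => hbc (Subtype.ext ?_)
    rw [← ((hpiece b a).1 ha).2, ← ((hpiece c a).1 hc).2]
  · ext a
    simp only [Set.mem_iUnion, hpiece]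
    constructor
    · rintro ⟨b, ha, hab⟩
      obtain ⟨c, hc, hcb⟩ := b.2
      rw [hmem a ha, hab, ← hcb, ← hmem c (hI.1 hc.1)]
      exact hc
    · intro ha
      exact ⟨⟨_, a, ha, rfl⟩, hI.1 ha.1, rfl⟩

end Existence

section LaurentExt

variable {A : Finset (Fin n)} {N : Set (Fin n → ℤ)} {ι : Type} {u : ι → Fin n → ℤ}
  {Z : ι → Finset (Fin n × Bool)}

lemma laurentExt_inter_eq (hN : N ⊆ SpMon A) :
    laurentExt A N ∩ {b | ∀ j ∈ A, b j = 0} = N := by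
  have hzero : ∀ b : Fin n → ℤ, (∀ j ∈ A, b j = 0) → zeroOn A b = b := fun b hb => by
    ext j
    by_cases hj : j ∈ A <;> simp [zeroOn, hj, hb]
  ext b
  constructor
  · rintro ⟨⟨-, hbN⟩, hb⟩
    rwa [hzero b hb] at hbN
  · intro hbN
    have hb : ∀ j ∈ A, b j = 0 := fun j hj => (hN hbN j).2 hj
    exact ⟨⟨fun j _ => (hN hbN j).1, by rwa [hzero b hb]⟩, hb⟩

lemma stanleySet_inter_eq {v c : Fin n → ℤ} {Y : Finset (Fin n × Bool)}
    (hc : c ∈ stanleySet v Y) (hcA : ∀ j ∈ A, c j = 0) :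
    stanleySet v Y ∩ {b | ∀ j ∈ A, b j = 0} = stanleySet (zeroOn A v) (Y.filter (·.1 ∉ A)) := by
  ext b
  simp only [stanleySet, Set.mem_inter_iff, Set.mem_ofPred_eq, Finset.mem_filter]
  rw [← forall_and]
  refine forall_congr' fun i => ?_
  have hci := hc i
  have hciA := hcA i
  by_cases hi : i ∈ A <;> simp [zeroOn, hi]; grind

lemma card_le_card_filter_add {Y : Finset (Fin n × Bool)} (hY : ZOk A Y) :
    Y.card ≤ (Y.filter (·.1 ∉ A)).card + A.card := by
  rw [← Finset.card_filter_add_card_filter_not (s := Y) (p := fun p => p.1 ∉ A)]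
  gcongr
  refine Finset.card_le_card_of_injOn Prod.fst
    (fun p hp => not_not.1 (Finset.mem_filter.1 hp).2) ?_
  rintro ⟨i, s⟩ hp ⟨j, t⟩ hq (rfl : i = j)
  simp only [Finset.coe_filter, Set.mem_ofPred_eq] at hp hq
  cases s <;> cases t
  · rfl
  · exact absurd ⟨hq.1, hp.1⟩ (hY.2 i)
  · exact absurd ⟨hp.1, hq.1⟩ (hY.2 i)
  · rfl

lemma IsStanleyDecompOn.restrict (hN : N ⊆ SpMon A)
    (h : IsStanleyDecompOn A (laurentExt A N) u Z) :
    IsStanleyDecompOn ∅ N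
      (fun x : {x // (stanleySet (u x) (Z x) ∩ {b | ∀ j ∈ A, b j = 0}).Nonempty} =>
        zeroOn A (u x))
      (fun x => (Z x).filter (·.1 ∉ A)) := by
  obtain ⟨hfin, hZ, hdisj, hcover⟩ := h
  have hpiece : ∀ x : {x // (stanleySet (u x) (Z x) ∩ {b | ∀ j ∈ A, b j = 0}).Nonempty},
      stanleySet (zeroOn A (u x)) ((Z x).filter (·.1 ∉ A)) =
        stanleySet (u x) (Z x) ∩ {b | ∀ j ∈ A, b j = 0} := fun ⟨x, c, hc, hcA⟩ =>
    (stanleySet_inter_eq hc hcA).symm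
  refine ⟨inferInstance, fun x => ⟨fun i hi => ?_, fun i hi => ?_⟩, fun x y hxy => ?_, ?_⟩
  · exact absurd (hZ x |>.1 i (Finset.mem_filter.1 hi).1) (Finset.mem_filter.1 hi).2
  · exact (hZ x).2 i ⟨(Finset.mem_filter.1 hi.1).1, (Finset.mem_filter.1 hi.2).1⟩
  · dsimp only
    rw [hpiece, hpiece]
    exact (hdisj (Subtype.coe_injective.ne hxy)).mono Set.inter_subset_left Set.inter_subset_left
  · rw [← laurentExt_inter_eq hN, ← hcover, Set.iUnion_inter]
    simp only [hpiece]
    ext b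
    simp only [Set.mem_iUnion]
    exact ⟨fun ⟨x, hb⟩ => ⟨x, hb⟩, fun ⟨x, hb⟩ => ⟨⟨x, b, hb⟩, hb⟩⟩

theorem sdepth_laurentExt_le (hN : N ⊆ SpMon A) :
    sdepth A (laurentExt A N) ≤ sdepth ∅ N + A.card := by
  refine sSup_le ?_
  rintro k ⟨r, u, Z, h, hk⟩
  calc k ≤ k - A.card + A.card := le_tsub_add
    _ ≤ sdepth ∅ N + A.card := by
      gcongr
      refine le_sdepth (h.restrict hN) fun x => tsub_le_iff_right.2 ((hk x).trans ?_)
      exact_mod_cast card_le_card_filter_add (h.2.1 x)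

/-- Together with `signVars`, selects the orthant in the `A`-coordinates where exactly the
exponents indexed by `T` are negative. -/
def signVec (T : Finset (Fin n)) : Fin n → ℤ := fun j => if j ∈ T then -1 else 0

def signVars (A T : Finset (Fin n)) : Finset (Fin n × Bool) :=
  A.image fun j => (j, decide (j ∉ T))

lemma card_union_signVars {Y : Finset (Fin n × Bool)} (hY : ∀ p ∈ Y, p.1 ∉ A)
    (T : Finset (Fin n)) : (Y ∪ signVars A T).card = Y.card + A.card := by
  rw [Finset.card_union_of_disjoint, signVars,
    Finset.card_image_of_injective _ fun i j h => congrArg Prod.fst h]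
  refine Finset.disjoint_left.2 fun p hpY hpA => hY p hpY ?_
  obtain ⟨j, hj, rfl⟩ := Finset.mem_image.1 hpA
  exact hj

lemma mem_stanleySet_add_signVec_iff {v : Fin n → ℤ} {Y : Finset (Fin n × Bool)}
    {T : Finset (Fin n)} (hT : T ⊆ A) (hv : ∀ j ∈ A, v j = 0) (hY : ∀ p ∈ Y, p.1 ∉ A)
    {b : Fin n → ℤ} :
    b ∈ stanleySet (v + signVec T) (Y ∪ signVars A T) ↔
      zeroOn A b ∈ stanleySet v Y ∧ T = A.filter (b · < 0) := by
  simp only [stanleySet, Set.mem_ofPred_eq, Finset.ext_iff, Finset.mem_filter]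
  rw [← forall_and]
  refine forall_congr' fun j => ?_
  have hTA := @hT j
  have hYt := hY (j, true)
  have hYf := hY (j, false)
  have hvj := hv j
  by_cases hj : j ∈ A <;> by_cases hjT : j ∈ T <;>
    simp [signVars, signVec, zeroOn, hj, hjT] <;> grind

lemma IsStanleyDecompOn.fst_notMem (hN : N ⊆ SpMon A) (h : IsStanleyDecompOn ∅ N u Z)
    (x : ι) : ∀ p ∈ Z x, p.1 ∉ A := by
  rintro ⟨j, _ | _⟩ hp hj
  · exact Finset.notMem_empty j ((h.2.1 x).1 j hp)
  · have hu := (hN (h.stanleySet_subset x (self_mem_stanleySet _ _)) j).2 hj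
    have hfalse : (j, false) ∉ Z x := fun hf => Finset.notMem_empty j ((h.2.1 x).1 j hf)
    have := (hN (h.stanleySet_subset x
      (update_mem_stanleySet hp hfalse (le_add_of_nonneg_right zero_le_one))) j).2 hj
    simp [hu] at this

lemma IsStanleyDecompOn.lift (hN : N ⊆ SpMon A) (h : IsStanleyDecompOn ∅ N u Z) :
    IsStanleyDecompOn A (laurentExt A N)
      (fun x : ι × {T : Finset (Fin n) // T ⊆ A} => u x.1 + signVec x.2.1)
      (fun x => Z x.1 ∪ signVars A x.2.1) := by
  have hpiece (x : ι × {T : Finset (Fin n) // T ⊆ A}) (b : Fin n → ℤ) :=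
    mem_stanleySet_add_signVec_iff (b := b) x.2.2
      (fun j hj => (hN (h.stanleySet_subset x.1 (self_mem_stanleySet _ _)) j).2 hj)
      (h.fst_notMem hN x.1)
  have hfalse (x : ι) (j : Fin n) : (j, false) ∉ Z x :=
    fun hf => Finset.notMem_empty j ((h.2.1 x).1 j hf)
  have hfin : Finite ι := h.1
  refine ⟨inferInstance, fun x => ⟨fun j hj => ?_, fun j hj => ?_⟩, fun x y hxy => ?_, ?_⟩
  · simp only [Finset.mem_union, hfalse, signVars, Finset.mem_image] at hj
    grind
  · have := h.fst_notMem hN x.1 (j, true)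
    simp [signVars, hfalse] at hj
    grind
  · refine Set.disjoint_left.2 fun b hbx hby => ?_
    obtain ⟨hbx, hTx⟩ := (hpiece x b).1 hbx
    obtain ⟨hby, hTy⟩ := (hpiece y b).1 hby
    have hT : x.2 = y.2 := Subtype.ext (hTx.trans hTy.symm)
    have h1 : x.1 ≠ y.1 := fun h1 => hxy (Prod.ext h1 hT)
    exact Set.disjoint_left.1 (h.2.2.1 h1) hbx hby
  · ext b
    simp only [Set.mem_iUnion, hpiece]
    constructor
    · rintro ⟨x, hb, -⟩
      have hbN := h.stanleySet_subset x.1 hb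
      refine ⟨fun j hj => ?_, hbN⟩
      simpa [zeroOn, hj] using (hN hbN j).1
    · rintro ⟨-, hbN⟩
      rw [← h.2.2.2, Set.mem_iUnion] at hbN
      obtain ⟨i, hi⟩ := hbN
      exact ⟨(i, ⟨_, Finset.filter_subset _ A⟩), hi, rfl⟩

theorem le_sdepth_laurentExt (hN : N ⊆ SpMon A) (hdec : IsStanleyDecompOn ∅ N u Z) :
    sdepth ∅ N + A.card ≤ sdepth A (laurentExt A N) := by
  obtain ⟨r₀, e, he⟩ := hdec.exists_fin
  rw [sdepth, ENat.sSup_add]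
  · refine iSup₂_le ?_
    rintro k ⟨r, u, Z, h, hk⟩
    refine le_sdepth (h.lift hN) fun x => ?_
    rw [card_union_signVars (h.fst_notMem hN x.1), Nat.cast_add]
    gcongr
    exact hk x.1
  · exact ⟨0, r₀, _, _, he, fun _ => zero_le⟩

theorem sdepth_laurentExt (hN : N ⊆ SpMon A) (hdec : IsStanleyDecompOn ∅ N u Z) :
    sdepth A (laurentExt A N) = sdepth ∅ N + A.card :=
  (sdepth_laurentExt_le hN).antisymm (le_sdepth_laurentExt hN hdec)

end LaurentExt

/-- A Stanley decomposition of `I'/J'` only involves variables `x_i` with `i ∉ A`, so the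
`S'`-Stanley depth of `I'/J'` is `sdepth ∅ (I' \ J')`. -/
theorem sdepth_localization_eq_sdepth_restriction_add_general {n : ℕ} (A : Finset (Fin n))
    (I J I' J' : Set (Fin n → ℤ))
    (hI' : I' ⊆ SpMon A) (hI'c : ∀ a ∈ I', ∀ c ∈ SpMon A, a + c ∈ I')
    (hJ' : J' ⊆ SpMon A) (hJ'c : ∀ a ∈ J', ∀ c ∈ SpMon A, a + c ∈ J')
    (hIdef : I = {b | ∃ a ∈ I', ∃ c ∈ SfMon A, b = a + c})
    (hJdef : J = {b | ∃ a ∈ J', ∃ c ∈ SfMon A, b = a + c}) :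
    I \ J = {b ∈ SfMon A | (fun i => if i ∈ A then 0 else b i) ∈ I' \ J'} ∧
    sdepth A (I \ J) = sdepth (∅ : Finset (Fin n)) (I' \ J') + (A.card : ℕ∞) := by
  have hI : IsMonomialIdealSp A I' := ⟨hI', hI'c⟩
  have hJ : IsMonomialIdealSp A J' := ⟨hJ', hJ'c⟩
  have hIJ : I \ J = laurentExt A (I' \ J') := by
    rw [hIdef, hJdef, hI.extension_eq, hJ.extension_eq, laurentExt_diff]
  obtain ⟨ι, u, Z, hdec⟩ := exists_isStanleyDecompOn_diff hI hJ
  exact ⟨hIJ, hIJ ▸ sdepth_laurentExt (fun b hb => hI' hb.1) hdec⟩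

/-- If `J' ⊂ I' ⊂ S' = K[x_i : i ∉ A]` are monomial ideals with `J = J'·S_f` and
`I = I'·S_f`, then `I/J = (I'/J')[x_i^{±1} : i ∈ A]` and consequently
`sdepth_{S_f} I/J = sdepth_{S'} I'/J' + |A|`.  (A Stanley decomposition of `I'/J'`
automatically involves only variables `x_i` with `i ∉ A`, so the `S'`-Stanley depth of
`I'/J'` is `sdepth ∅ (I' \ J')`.) -/
theorem sdepth_localization_eq_sdepth_restriction_add {n : ℕ} (A : Finset (Fin n))
    (I J I' J' : Set (Fin n → ℤ))
    (hI' : I' ⊆ SpMon A) (hI'c : ∀ a ∈ I', ∀ c ∈ SpMon A, a + c ∈ I')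
    (hJ' : J' ⊆ SpMon A) (hJ'c : ∀ a ∈ J', ∀ c ∈ SpMon A, a + c ∈ J')
    (hJI' : J' ⊂ I')
    (hIdef : I = {b | ∃ a ∈ I', ∃ c ∈ SfMon A, b = a + c})
    (hJdef : J = {b | ∃ a ∈ J', ∃ c ∈ SfMon A, b = a + c}) :
    I \ J = {b ∈ SfMon A | (fun i => if i ∈ A then 0 else b i) ∈ I' \ J'} ∧
    sdepth A (I \ J) = sdepth (∅ : Finset (Fin n)) (I' \ J') + (A.card : ℕ∞) :=
  sdepth_localization_eq_sdepth_restriction_add_general A I J I' J' hI' hI'c hJ' hJ'c hIdef hJdef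
end

section
/- For monomial ideals J ⊂ I ⊂ S, the fdepth does not decrease upon localization at f: fdepth(I/J) ≤ fdepth((I/J)_f). More precisely, if F : J = J_0 ⊂ J_1 ⊂ … ⊂ J_r = I is a prime filtration of I/J with Supp(F) = {P_1,…,P_r}, then discarding from the localized chain J_f = (J_0)_f ⊆ (J_1)_f ⊆ … ⊆ (J_r)_f = I_f those steps with (J_i)_f = (J_{i-1})_f (equivalently S_f/P_iS_f = 0) yields a prime filtration F_f of (I/J)_f, and dim S_f/P_iS_f = dim S/P_i whenever S_f/P_iS_f ≠ 0, so fdepth(F_f) ≥ fdepth(F). -/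
/-!
On exponent sets, localizing a monomial ideal `M` of `S` at `f` gives: `b ∈ M_f` iff
`b + m·fVec A ∈ M` for all large `m`; hence `b ∈ M'_f \ M_f` iff `b + m·fVec A ∈ M' \ M` for
all large `m`. For a step `M' \ M = a + {c ≥ 0 | c = 0 on B}` of a prime filtration of `I/J`
this set is empty as soon as some `j ∈ B` lies in `A` (the `j`-th coordinate would be pinned to
`a j` while growing with `m`); otherwise it is the exponent set of `(S_f/P_B S_f)(-a')`, where
`a'` is `a` with its `A`-coordinates erased. So the localized chain, with the collapsed steps
discarded, is a prime filtration of `(I/J)_f` whose primes are among the original ones.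
-/

open Filter

section Localization

variable {n : ℕ} {A : Finset (Fin n)}

/-- Exponent set of `(S_f/P_B S_f)(-a)`, the shape of a factor of a prime filtration. -/
def shiftedPrimeSet (A B : Finset (Fin n)) (a : Fin n → ℤ) : Set (Fin n → ℤ) :=
  {b | ∃ c ∈ SfMon A, (∀ j ∈ B, c j = 0) ∧ b = a + c}

theorem mem_shiftedPrimeSet_iff {B : Finset (Fin n)} {a b : Fin n → ℤ} :
    b ∈ shiftedPrimeSet A B a ↔ ∀ j, (j ∉ A → a j ≤ b j) ∧ (j ∈ B → b j = a j) := by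
  constructor
  · rintro ⟨c, hc, hcB, rfl⟩ j
    exact ⟨fun hj => by simpa using hc j hj, fun hj => by simp [hcB j hj]⟩
  · intro h
    refine ⟨b - a, fun j hj => by simpa using (h j).1 hj, fun j hj => ?_, by simp⟩
    simp [(h j).2 hj]

theorem mem_SfMon_empty {c : Fin n → ℤ} : c ∈ SfMon (∅ : Finset (Fin n)) ↔ ∀ j, 0 ≤ c j := by
  simp [SfMon]

theorem fVec_nonneg (j : Fin n) : 0 ≤ fVec A j := by
  unfold fVec
  split <;> norm_num

theorem locSet_mono {M M' : Set (Fin n → ℤ)} (h : M ⊆ M') : locSet A M ⊆ locSet A M' :=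
  fun _ ⟨hb, k, hk⟩ => ⟨hb, k, h hk⟩

theorem eventually_add_smul_fVec_mem_SfMon_empty {c : Fin n → ℤ} (hc : c ∈ SfMon A) :
    ∀ᶠ m : ℕ in atTop, c + (m : ℤ) • fVec A ∈ SfMon ∅ := by
  simp only [mem_SfMon_empty, Pi.add_apply, Pi.smul_apply, fVec, smul_eq_mul]
  refine eventually_all.2 fun j => ?_
  by_cases hj : j ∈ A
  · filter_upwards [eventually_ge_atTop (-c j).toNat] with m hm
    simp only [hj, if_true, mul_one]
    omega
  · exact Eventually.of_forall fun m => by simpa [hj] using hc j hj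

theorem IsMonomialIdeal.add_smul_fVec_mem_of_le {M : Set (Fin n → ℤ)}
    (hM : IsMonomialIdeal ∅ M) {b : Fin n → ℤ} {k m : ℕ} (hkm : k ≤ m)
    (hk : b + (k : ℤ) • fVec A ∈ M) : b + (m : ℤ) • fVec A ∈ M := by
  have hshift : ((m - k : ℕ) : ℤ) • fVec A ∈ SfMon ∅ :=
    mem_SfMon_empty.2 fun j => smul_nonneg (Int.natCast_nonneg _) (fVec_nonneg j)
  convert hM.2 _ hk _ hshift using 1
  rw [add_assoc, ← add_smul]
  push_cast [hkm]
  ring_nf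

theorem IsMonomialIdeal.mem_locSet_iff {M : Set (Fin n → ℤ)} (hM : IsMonomialIdeal ∅ M)
    {b : Fin n → ℤ} :
    b ∈ locSet A M ↔ b ∈ SfMon A ∧ ∀ᶠ m : ℕ in atTop, b + (m : ℤ) • fVec A ∈ M := by
  refine and_congr_right fun _ => ⟨fun ⟨k, hk⟩ => ?_, fun h => h.exists⟩
  filter_upwards [eventually_ge_atTop k] with m hm
  exact hM.add_smul_fVec_mem_of_le hm hk

theorem IsMonomialIdeal.localize {M : Set (Fin n → ℤ)} (hM : IsMonomialIdeal ∅ M) :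
    IsMonomialIdeal A (locSet A M) := by
  refine ⟨fun b hb => hb.1, fun b hb' c hc => ?_⟩
  obtain ⟨hb, hev⟩ := hM.mem_locSet_iff.1 hb'
  obtain ⟨m, hbm, hcm⟩ := (hev.and (eventually_add_smul_fVec_mem_SfMon_empty hc)).exists
  refine ⟨fun j hj => add_nonneg (hb j hj) (hc j hj), m + m, ?_⟩
  convert hM.2 _ hbm _ hcm using 1
  push_cast
  rw [add_smul]
  abel

theorem IsMonomialIdeal.mem_locSet_sdiff_iff {M M' : Set (Fin n → ℤ)}
    (hM : IsMonomialIdeal ∅ M) (hM' : IsMonomialIdeal ∅ M') {b : Fin n → ℤ} :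
    b ∈ locSet A M' \ locSet A M ↔
      b ∈ SfMon A ∧ ∀ᶠ m : ℕ in atTop, b + (m : ℤ) • fVec A ∈ M' \ M := by
  constructor
  · rintro ⟨hb', hbM⟩
    obtain ⟨hb, hev⟩ := hM'.mem_locSet_iff.1 hb'
    exact ⟨hb, hev.mono fun m hm => ⟨hm, fun hm' => hbM ⟨hb, m, hm'⟩⟩⟩
  · rintro ⟨hb, hev⟩
    refine ⟨⟨hb, (hev.mono fun _ => And.left).exists⟩, fun hbM => ?_⟩
    obtain ⟨m, hm, hm'⟩ := ((hM.mem_locSet_iff.1 hbM).2.and hev).exists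
    exact hm'.2 hm

/-- `M'/M ≅ (S_f/P_B S_f)(-a)`: one step of a prime filtration. -/
structure IsPrimeStep (A : Finset (Fin n)) (M M' : Set (Fin n → ℤ)) (B : Finset (Fin n))
    (a : Fin n → ℤ) : Prop where
  ssubset : M ⊂ M'
  disjoint : ∀ j ∈ A, j ∉ B
  nonneg : ∀ j, 0 ≤ a j
  eq_zero_of_mem : ∀ j ∈ A, a j = 0
  sdiff_eq : M' \ M = shiftedPrimeSet A B a

variable {M M' : Set (Fin n → ℤ)} {B : Finset (Fin n)} {a : Fin n → ℤ}

theorem IsPrimeStep.locSet_eq_of_mem (hM : IsMonomialIdeal ∅ M) (hM' : IsMonomialIdeal ∅ M')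
    (h : IsPrimeStep ∅ M M' B a) {l : Fin n} (hlB : l ∈ B) (hlA : l ∈ A) :
    locSet A M' = locSet A M := by
  refine (Set.sdiff_eq_empty.1 ?_).antisymm (locSet_mono h.ssubset.subset)
  refine Set.eq_empty_of_forall_notMem fun b hb => ?_
  obtain ⟨-, hev⟩ := (hM.mem_locSet_sdiff_iff hM').1 hb
  rw [h.sdiff_eq] at hev
  obtain ⟨m, hm, hlt⟩ := (hev.and (eventually_gt_atTop (a l - b l).toNat)).exists
  have hl := (mem_shiftedPrimeSet_iff.1 hm l).2 hlB
  simp only [Pi.add_apply, Pi.smul_apply, fVec, hlA, if_true, smul_eq_mul, mul_one] at hl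
  omega

theorem IsPrimeStep.localize (hM : IsMonomialIdeal ∅ M) (hM' : IsMonomialIdeal ∅ M')
    (h : IsPrimeStep ∅ M M' B a) (hBA : ∀ j ∈ A, j ∉ B) :
    IsPrimeStep A (locSet A M) (locSet A M') B (fun j => if j ∈ A then 0 else a j) := by
  have hdiff : locSet A M' \ locSet A M =
      shiftedPrimeSet A B fun j => if j ∈ A then 0 else a j := by
    ext b
    rw [hM.mem_locSet_sdiff_iff hM', h.sdiff_eq]
    simp only [mem_shiftedPrimeSet_iff, Finset.notMem_empty, not_false_eq_true, forall_const,
      eventually_all, SfMon, Set.mem_ofPred_eq, Pi.add_apply, Pi.smul_apply, smul_eq_mul, fVec]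
    rw [← forall_and]
    refine forall_congr' fun j => ?_
    by_cases hj : j ∈ A
    · simp only [hj, hBA j hj, if_true, not_true_eq_false, false_imp_iff, mul_one, and_true,
        true_and, iff_true]
      filter_upwards [eventually_ge_atTop (a j - b j).toNat] with m hm
      omega
    · simp only [hj, if_false, mul_zero, add_zero, eventually_const, not_false_eq_true,
        forall_const]
      exact ⟨And.right, fun hb => ⟨(h.nonneg j).trans hb.1, hb⟩⟩
  have hmem : (fun j => if j ∈ A then 0 else a j) ∈
      shiftedPrimeSet A B fun j => if j ∈ A then 0 else a j :=
    ⟨0, fun _ _ => le_rfl, fun _ _ => rfl, (add_zero _).symm⟩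
  refine ⟨Set.ssubset_iff_subset_ne.2 ⟨locSet_mono h.ssubset.subset, fun heq => ?_⟩, hBA,
    fun j => ?_, fun j hj => if_pos hj, hdiff⟩
  · rw [← hdiff, heq, Set.sdiff_self] at hmem
    exact hmem
  · split_ifs
    exacts [le_rfl, h.nonneg j]

end Localization

namespace IsPrimeFiltration

variable {n r : ℕ} {A : Finset (Fin n)} {J I : Set (Fin n → ℤ)}
  {N : Fin (r + 1) → Set (Fin n → ℤ)} {B : Fin r → Finset (Fin n)} {a : Fin r → Fin n → ℤ}

theorem zero (hJ : IsMonomialIdeal A J) :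
    IsPrimeFiltration A J J 0 (fun _ => J) Fin.elim0 Fin.elim0 :=
  ⟨rfl, rfl, fun _ => hJ, nofun, nofun, nofun, nofun, nofun⟩

theorem apply_zero (h : IsPrimeFiltration A J I r N B a) : N 0 = J := h.1

theorem apply_last (h : IsPrimeFiltration A J I r N B a) : N (Fin.last r) = I := h.2.1

theorem eq_of_length_zero {N : Fin 1 → Set (Fin n → ℤ)} {B : Fin 0 → Finset (Fin n)}
    {a : Fin 0 → Fin n → ℤ} (h : IsPrimeFiltration A J I 0 N B a) : J = I :=
  h.apply_zero.symm.trans h.apply_last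

theorem isMonomialIdeal (h : IsPrimeFiltration A J I r N B a) (i : Fin (r + 1)) :
    IsMonomialIdeal A (N i) :=
  h.2.2.1 i

theorem isMonomialIdeal_left (h : IsPrimeFiltration A J I r N B a) : IsMonomialIdeal A J :=
  h.apply_zero ▸ h.isMonomialIdeal 0

theorem isMonomialIdeal_right (h : IsPrimeFiltration A J I r N B a) : IsMonomialIdeal A I :=
  h.apply_last ▸ h.isMonomialIdeal (Fin.last r)

theorem isPrimeStep (h : IsPrimeFiltration A J I r N B a) (i : Fin r) :
    IsPrimeStep A (N i.castSucc) (N i.succ) (B i) (a i) :=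
  let ⟨_, _, _, hlt, hBA, ha, haA, hdiff⟩ := h
  ⟨hlt i, hBA i, ha i, haA i, hdiff i⟩

theorem init {N : Fin (r + 2) → Set (Fin n → ℤ)} {B : Fin (r + 1) → Finset (Fin n)}
    {a : Fin (r + 1) → Fin n → ℤ} (h : IsPrimeFiltration A J I (r + 1) N B a) :
    IsPrimeFiltration A J (N (Fin.last r).castSucc) r (fun i => N i.castSucc)
      (fun i => B i.castSucc) (fun i => a i.castSucc) := by
  obtain ⟨h0, -, hN, hlt, hBA, ha, haA, hdiff⟩ := h
  refine ⟨h0, rfl, fun i => hN _, fun i => ?_, fun i => hBA _, fun i => ha _, fun i => haA _,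
    fun i => ?_⟩
  · simpa only [Fin.succ_castSucc] using hlt i.castSucc
  · simpa only [Fin.succ_castSucc] using hdiff i.castSucc

theorem snoc (h : IsPrimeFiltration A J I r N B a) {I' : Set (Fin n → ℤ)}
    {B₀ : Finset (Fin n)} {a₀ : Fin n → ℤ} (hI' : IsMonomialIdeal A I')
    (hstep : IsPrimeStep A I I' B₀ a₀) :
    IsPrimeFiltration A J I' (r + 1) (Fin.snoc N I') (Fin.snoc B B₀) (Fin.snoc a a₀) := by
  obtain ⟨h0, hr, hN, hlt, hBA, ha, haA, hdiff⟩ := h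
  obtain ⟨hlt₀, hBA₀, ha₀, haA₀, hdiff₀⟩ := hstep
  refine ⟨?_, Fin.snoc_last .., Fin.forall_fin_succ'.2 ?_, Fin.forall_fin_succ'.2 ?_,
    Fin.forall_fin_succ'.2 ?_, Fin.forall_fin_succ'.2 ?_, Fin.forall_fin_succ'.2 ?_,
    Fin.forall_fin_succ'.2 ?_⟩ <;>
    simp only [← Fin.castSucc_zero, Fin.succ_castSucc, Fin.succ_last, Fin.snoc_castSucc,
      Fin.snoc_last, hr]
  exacts [h0, ⟨hN, hI'⟩, ⟨hlt, hlt₀⟩, ⟨hBA, hBA₀⟩, ⟨ha, ha₀⟩, ⟨haA, haA₀⟩, ⟨hdiff, hdiff₀⟩]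

theorem exists_localization (h : IsPrimeFiltration ∅ J I r N B a) :
    ∃ (s : ℕ) (N' : Fin (s + 1) → Set (Fin n → ℤ)) (B' : Fin s → Finset (Fin n))
      (a' : Fin s → Fin n → ℤ),
      IsPrimeFiltration A (locSet A J) (locSet A I) s N' B' a' ∧
      (∀ j : Fin (s + 1), ∃ i : Fin (r + 1), N' j = locSet A (N i)) ∧
      (∀ j : Fin s, ∃ i : Fin r, (∀ l ∈ A, l ∉ B i) ∧ B' j = B i) := by
  induction r generalizing I with
  | zero =>
    obtain rfl := h.eq_of_length_zero
    exact ⟨0, fun _ => locSet A J, Fin.elim0, Fin.elim0, .zero h.isMonomialIdeal_left.localize,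
      fun _ => ⟨0, by rw [h.apply_zero]⟩, nofun⟩
  | succ r ih =>
    obtain ⟨s, N', B', a', hF, hN', hB'⟩ := ih h.init
    have hlast := h.isPrimeStep (Fin.last r)
    rw [Fin.succ_last, h.apply_last] at hlast
    have hI₀ := h.isMonomialIdeal (Fin.last r).castSucc
    have hI := h.isMonomialIdeal_right
    by_cases hBA : ∀ l ∈ A, l ∉ B (Fin.last r)
    · refine ⟨s + 1, Fin.snoc N' (locSet A I), Fin.snoc B' (B (Fin.last r)), Fin.snoc a' _,
        hF.snoc hI.localize (hlast.localize hI₀ hI hBA),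
        Fin.forall_fin_succ'.2 ⟨fun j => ?_, ?_⟩, Fin.forall_fin_succ'.2 ⟨fun j => ?_, ?_⟩⟩ <;>
        simp only [Fin.snoc_castSucc, Fin.snoc_last]
      · exact (hN' j).imp' Fin.castSucc fun _ => id
      · exact ⟨Fin.last _, by rw [h.apply_last]⟩
      · exact (hB' j).imp' Fin.castSucc fun _ => id
      · exact ⟨Fin.last r, hBA, rfl⟩
    · obtain ⟨l, hlA, hlB⟩ : ∃ l ∈ A, l ∈ B (Fin.last r) := by simpa using hBA
      rw [hlast.locSet_eq_of_mem hI₀ hI hlB hlA]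
      exact ⟨s, N', B', a', hF, fun j => (hN' j).imp' Fin.castSucc fun _ => id,
        fun j => (hB' j).imp' Fin.castSucc fun _ => id⟩

end IsPrimeFiltration

theorem fdepth_le_fdepth_localization_general {n : ℕ} (A : Finset (Fin n))
    (I J : Set (Fin n → ℤ)) :
    fdepth (∅ : Finset (Fin n)) J I ≤ fdepth A (locSet A J) (locSet A I) ∧
    ∀ (r : ℕ) (N : Fin (r + 1) → Set (Fin n → ℤ)) (B : Fin r → Finset (Fin n))
      (a : Fin r → Fin n → ℤ), IsPrimeFiltration (∅ : Finset (Fin n)) J I r N B a →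
      ∃ (s : ℕ) (N' : Fin (s + 1) → Set (Fin n → ℤ)) (B' : Fin s → Finset (Fin n))
        (a' : Fin s → Fin n → ℤ),
        IsPrimeFiltration A (locSet A J) (locSet A I) s N' B' a' ∧
        (∀ j : Fin (s + 1), ∃ i : Fin (r + 1), N' j = locSet A (N i)) ∧
        (∀ j : Fin s, ∃ i : Fin r, (∀ l ∈ A, l ∉ B i) ∧ B' j = B i) ∧
        (Finset.univ.inf fun i : Fin r => ((n - (B i).card : ℕ) : ℕ∞)) ≤
          Finset.univ.inf fun j : Fin s => ((n - (B' j).card : ℕ) : ℕ∞) := by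
  refine ⟨sSup_le_sSup ?_, fun r N B a hF => ?_⟩
  · rintro k ⟨r, N, B, a, hF, hk⟩
    obtain ⟨s, N', B', a', hF', -, hB'⟩ := hF.exists_localization (A := A)
    refine ⟨s, N', B', a', hF', fun j => ?_⟩
    obtain ⟨i, -, hi⟩ := hB' j
    exact hi ▸ hk i
  · obtain ⟨s, N', B', a', hF', hN', hB'⟩ := hF.exists_localization (A := A)
    refine ⟨s, N', B', a', hF', hN', hB', Finset.le_inf fun j _ => ?_⟩
    obtain ⟨i, -, hi⟩ := hB' j
    exact hi ▸ Finset.inf_le (Finset.mem_univ i)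

/-- `fdepth` does not decrease upon localization: for monomial ideals `J ⊂ I ⊂ S`
(ambient parameter `A = ∅`), `fdepth I/J ≤ fdepth (I/J)_f`.  More precisely, from every
prime filtration `F` of `I/J` with support `{P_{B 1}, …, P_{B r}}`, discarding the
collapsed steps of the localized chain (those with `S_f/P_{B i}S_f = 0`, i.e.
`B i ∩ A ≠ ∅`) yields a prime filtration `F_f` of `(I/J)_f` whose ideals are the
localizations of the `N i` and whose primes are the surviving `P_{B i}·S_f`; since
`dim S_f/P_B S_f = dim S/P_B = n - |B|` for surviving primes, `fdepth F_f ≥ fdepth F`. -/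
theorem fdepth_le_fdepth_localization {n : ℕ} (A : Finset (Fin n))
    (I J : Set (Fin n → ℤ))
    (hI : IsMonomialIdeal (∅ : Finset (Fin n)) I) (hJ : IsMonomialIdeal ∅ J)
    (hJI : J ⊂ I) :
    fdepth (∅ : Finset (Fin n)) J I ≤ fdepth A (locSet A J) (locSet A I) ∧
    ∀ (r : ℕ) (N : Fin (r + 1) → Set (Fin n → ℤ)) (B : Fin r → Finset (Fin n))
      (a : Fin r → Fin n → ℤ), IsPrimeFiltration (∅ : Finset (Fin n)) J I r N B a →
      ∃ (s : ℕ) (N' : Fin (s + 1) → Set (Fin n → ℤ)) (B' : Fin s → Finset (Fin n))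
        (a' : Fin s → Fin n → ℤ),
        IsPrimeFiltration A (locSet A J) (locSet A I) s N' B' a' ∧
        (∀ j : Fin (s + 1), ∃ i : Fin (r + 1), N' j = locSet A (N i)) ∧
        (∀ j : Fin s, ∃ i : Fin r, (∀ l ∈ A, l ∉ B i) ∧ B' j = B i) ∧
        (Finset.univ.inf fun i : Fin r => ((n - (B i).card : ℕ) : ℕ∞)) ≤
          Finset.univ.inf fun j : Fin s => ((n - (B' j).card : ℕ) : ℕ∞) :=
  fdepth_le_fdepth_localization_general A I J
end
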